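/- arXiv:1005.1496 — 13 statements merged into one kernel-verified Lean document; each statement's English description precedes it below -/
import Mathlib

section
/- Fix a point z ∈ P and a k-tuple of tangent vectors Z_A = ((Z_A^i)_i, ((Z_A)^B_i)_{B,i}) ∈ ℝ^n × M for A ∈ Fin k. Then the linear form v ↦ Σ_{A} ω^A(Z_A, v) on ℝ^n × M equals the differential dH(z) if and only if Z_A^i = ∂H/∂p^A_i (z) for all A and i, and Σ_{A} (Z_A)^A_i = − ∂H/∂q^i (z) for all i. (Local characterization of solutions of the Hamilton equation ♭(Z) = dH.) -/
open scoped BigOperators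

noncomputable section

/-- The phase space `P = ℝ^n × M`, `M = (Fin k → Fin n → ℝ)`. -/
abbrev Phase (n k : ℕ) := (Fin n → ℝ) × (Fin k → Fin n → ℝ)

/-- The canonical presymplectic 2-form `ω^A` on `ℝ^n × M`:
`ω^A((u,P),(u',P')) = Σ_i (u^i (P')^A_i − (u')^i P^A_i)`. -/
def omegaK {n k : ℕ} (A : Fin k) (z z' : Phase n k) : ℝ :=
  ∑ i, (z.1 i * z'.2 A i - z'.1 i * z.2 A i)

/-- `∂H/∂q^i` at `z`. -/
def Hq {n k : ℕ} (H : Phase n k → ℝ) (z : Phase n k) (i : Fin n) : ℝ :=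
  fderiv ℝ H z (Pi.single i 1, 0)

/-- `∂H/∂p^A_i` at `z`. -/
def Hp {n k : ℕ} (H : Phase n k → ℝ) (z : Phase n k) (A : Fin k) (i : Fin n) : ℝ :=
  fderiv ℝ H z (0, Pi.single A (Pi.single i 1))

/-- A `k`-vector field `Z` is a solution of the Hamilton equations `♭(Z) = dH`:
`Z_A^i = ∂H/∂p^A_i` and `Σ_A (Z_A)^A_i = −∂H/∂q^i` hold on `P`. -/
def HamEqs {n k : ℕ} (H : Phase n k → ℝ) (Z : Fin k → Phase n k → Phase n k) : Prop :=
  ∀ z, (∀ A i, (Z A z).1 i = Hp H z A i) ∧ (∀ i, ∑ A, (Z A z).2 A i = - Hq H z i)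

/-- `(σ, π) : U → P` satisfies the Hamilton field equations:
`∂σ^i/∂t^A = (∂H/∂p^A_i) ∘ (σ,π)` and `Σ_A ∂π^A_i/∂t^A = −(∂H/∂q^i) ∘ (σ,π)` on `U`. -/
def HamFieldEqs {n k : ℕ} (H : Phase n k → ℝ) (U : Set (Fin k → ℝ))
    (σ : (Fin k → ℝ) → Phase n k) : Prop :=
  ∀ t ∈ U,
    (∀ (A : Fin k) (i : Fin n),
      fderiv ℝ (fun s => (σ s).1 i) t (Pi.single A 1) = Hp H (σ t) A i) ∧
    (∀ i : Fin n,
      ∑ A, fderiv ℝ (fun s => (σ s).2 A i) t (Pi.single A 1) = - Hq H (σ t) i)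

/-- A closed section `γ : Q → (T^1_k)^*Q`: a smooth map `γ : ℝ^n → M` with
`∂γ^A_i/∂q^j = ∂γ^A_j/∂q^i`. -/
def ClosedSection {n k : ℕ} (γ : (Fin n → ℝ) → (Fin k → Fin n → ℝ)) : Prop :=
  ContDiff ℝ (⊤ : ℕ∞) γ ∧
  ∀ (q : Fin n → ℝ) (A : Fin k) (i j : Fin n),
    fderiv ℝ (fun q => γ q A i) q (Pi.single j 1) =
      fderiv ℝ (fun q => γ q A j) q (Pi.single i 1)

/-- An integral section of a `k`-vector field `X` on `ℝ^n`: a `C¹` map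
`σ : U → ℝ^n` on an open set `U ⊆ ℝ^k` with `∂σ^i/∂t^A = X_A^i ∘ σ` on `U`. -/
def IsIntegralSection {n k : ℕ} (X : Fin k → (Fin n → ℝ) → (Fin n → ℝ))
    (U : Set (Fin k → ℝ)) (σ : (Fin k → ℝ) → (Fin n → ℝ)) : Prop :=
  IsOpen U ∧ ContDiffOn ℝ 1 σ U ∧
    ∀ t ∈ U, ∀ A, fderiv ℝ σ t (Pi.single A 1) = X A (σ t)

/-- `X` is integrable: an integral section passes through every point of `ℝ^n`. -/
def Integrable {n k : ℕ} (X : Fin k → (Fin n → ℝ) → (Fin n → ℝ)) : Prop :=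
  ∀ q₀ : Fin n → ℝ, ∃ (U : Set (Fin k → ℝ)) (σ : (Fin k → ℝ) → (Fin n → ℝ)),
    IsIntegralSection X U σ ∧ (0 : Fin k → ℝ) ∈ U ∧ σ 0 = q₀

lemma clm_decomp {n k : ℕ} (L : Phase n k →L[ℝ] ℝ) (v : Phase n k) :
    L v = ∑ i, v.1 i * L (Pi.single i 1, 0)
        + ∑ A, ∑ i, v.2 A i * L (0, Pi.single A (Pi.single i 1)) := by
  have hv : v = (∑ i, (v.1 i) • (((Pi.single i 1, 0) : Phase n k)))
      + ∑ A, ∑ i, (v.2 A i) • (((0, Pi.single A (Pi.single i 1)) : Phase n k)) := by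
    apply Prod.ext
    · funext j
      simp [Prod.fst_sum, Finset.sum_apply, Pi.single_apply, mul_ite, Finset.sum_ite_eq']
    · funext B j
      simp only [Prod.snd_add, Prod.snd_sum, Prod.smul_snd, Finset.sum_apply,
        Pi.smul_apply, Pi.single_apply, smul_eq_mul, Prod.snd_zero,
        Pi.add_apply, Pi.zero_apply, smul_zero, Finset.sum_const_zero, zero_add]
      rw [Finset.sum_eq_single B]
      · simp [Pi.single_apply, mul_ite, Finset.sum_ite_eq']
      · intro b _ hb; simp [Pi.single_apply, Ne.symm hb]
      · simp
  conv_lhs => rw [hv]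
  simp only [map_add, map_sum, map_smul, smul_eq_mul]

/-- Local characterization of solutions of the Hamilton equation
`♭(Z) = dH` at a fixed point `z`. -/
theorem hamilton_equation_local_characterization {n k : ℕ}
    (H : Phase n k → ℝ) (hH : ContDiff ℝ (⊤ : ℕ∞) H)
    (z : Phase n k) (Z : Fin k → Phase n k) :
    (∀ v : Phase n k, ∑ A, omegaK A (Z A) v = fderiv ℝ H z v) ↔
      ((∀ A i, (Z A).1 i = Hp H z A i) ∧
       (∀ i, ∑ A, (Z A).2 A i = - Hq H z i)) := by
  constructor
  · intro h
    constructor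
    · intro A i
      have hA := h (0, Pi.single A (Pi.single i 1))
      simp only [Hp]
      rw [← hA]
      simp only [omegaK]
      rw [Finset.sum_eq_single A]
      · rw [Finset.sum_eq_single i]
        · simp
        · intro b _ hb; simp [Pi.single_apply, hb]
        · simp
      · intro b _ hb; simp [Pi.single_apply, hb]
      · simp
    · intro i
      have hi := h (Pi.single i 1, 0)
      simp only [Hq]
      rw [← hi]
      simp only [omegaK]
      rw [← Finset.sum_neg_distrib]
      refine Finset.sum_congr rfl fun A _ => ?_
      rw [← Finset.sum_neg_distrib]
      rw [Finset.sum_eq_single i]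
      · simp
      · intro b _ hb; simp [Pi.single_apply, hb]
      · simp
  · rintro ⟨h1, h2⟩ v
    rw [clm_decomp (fderiv ℝ H z) v]
    simp only [omegaK, h1, Finset.sum_sub_distrib]
    rw [show (∑ A, ∑ i, v.1 i * (Z A).2 A i) = ∑ i, ∑ A, v.1 i * (Z A).2 A i from
      Finset.sum_comm]
    have e2 : ∑ i, ∑ A, v.1 i * (Z A).2 A i = ∑ i, v.1 i * (- Hq H z i) := by
      refine Finset.sum_congr rfl fun i _ => ?_
      rw [← Finset.mul_sum, h2 i]
    rw [e2]
    simp only [Hq, Hp, mul_neg, Finset.sum_neg_distrib, sub_neg_eq_add]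
    rw [add_comm]
    congr 1
    exact Finset.sum_congr rfl fun A _ => Finset.sum_congr rfl fun i _ => mul_comm _ _
end
end

section
/- For a k-tuple of tangent vectors Z_A = ((Z_A^i)_i, ((Z_A)^B_i)_{B,i}) ∈ ℝ^n × M, A ∈ Fin k, the linear form v ↦ Σ_{A} ω^A(Z_A, v) on ℝ^n × M vanishes identically if and only if Z_A^i = 0 for all A and i, and Σ_{A} (Z_A)^A_i = 0 for all i. (Characterization of the kernel of the map ♭.) -/
open scoped BigOperators

noncomputable section

/-- Characterization of the kernel of the map `♭`. -/
theorem kernel_flat_characterization {n k : ℕ} (Z : Fin k → Phase n k) :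
    (∀ v : Phase n k, ∑ A, omegaK A (Z A) v = 0) ↔
      ((∀ A i, (Z A).1 i = 0) ∧ (∀ i, ∑ A, (Z A).2 A i = 0)) := by
  constructor
  · intro h
    constructor
    · intro A i
      have := h (0, Pi.single A (Pi.single i 1))
      simpa [omegaK, Pi.single_apply, ite_apply, mul_ite, Finset.sum_ite_eq'] using this
    · intro i
      have := h (Pi.single i 1, 0)
      simp only [omegaK] at this
      rw [Finset.sum_comm] at this
      simpa [Pi.single_apply, ite_mul, Finset.sum_ite_eq, Finset.sum_neg_distrib] using this
  · rintro ⟨h1, h2⟩ v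
    simp only [omegaK]
    have : ∀ A : Fin k, ∑ i, ((Z A).1 i * v.2 A i - v.1 i * (Z A).2 A i)
        = ∑ i, (- (v.1 i * (Z A).2 A i)) := by
      intro A
      refine Finset.sum_congr rfl fun i _ => ?_
      rw [h1 A i]; ring
    simp only [this]
    rw [Finset.sum_comm]
    simp only [Finset.sum_neg_distrib, ← Finset.mul_sum]
    simp [h2]
end
end

section
/- Let Z be a solution of the Hamilton equations and γ a closed section such that d(H ∘ γ̃) = 0, i.e., the derivative of H ∘ γ̃ : ℝ^n → ℝ vanishes identically. Then for every integral section σ of the projected k-vector field Z^γ (whose components are (Z^γ_A)^i = Z_A^i ∘ γ̃ = (∂H/∂p^A_i) ∘ γ̃), the map γ̃ ∘ σ = (σ, γ ∘ σ) satisfies the Hamilton field equations. -/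
open scoped BigOperators

noncomputable section

-- AUX
lemma vec_decomp {n : ℕ} (v : Fin n → ℝ) :
    v = ∑ j, v j • (Pi.single j (1:ℝ) : Fin n → ℝ) := by
  funext m
  simp [Finset.sum_apply, Pi.single_apply]

lemma pi_decomp {n k : ℕ} (P : Fin k → Fin n → ℝ) :
    P = ∑ A, ∑ j, P A j • (Pi.single A (Pi.single j (1:ℝ)) : Fin k → Fin n → ℝ) := by
  funext B m
  simp only [Finset.sum_apply, Pi.smul_apply, Pi.single_apply, smul_eq_mul,
    mul_ite, mul_one, mul_zero, ite_apply, Pi.zero_apply]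
  rw [Finset.sum_comm]
  simp

lemma clm_vec {n : ℕ} (L : (Fin n → ℝ) →L[ℝ] ℝ) (v : Fin n → ℝ) :
    L v = ∑ j, v j * L (Pi.single j (1:ℝ)) := by
  conv_lhs => rw [vec_decomp v]
  simp [map_sum, map_smul]

lemma clm_pi {n k : ℕ} (L : (Fin k → Fin n → ℝ) →L[ℝ] ℝ) (P : Fin k → Fin n → ℝ) :
    L P = ∑ A, ∑ j, P A j * L (Pi.single A (Pi.single j (1:ℝ))) := by
  conv_lhs => rw [pi_decomp P]
  simp [map_sum, map_smul]

lemma fderiv_eval {n k : ℕ} {γ : (Fin n → ℝ) → (Fin k → Fin n → ℝ)}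
    (hγ : ContDiff ℝ (⊤ : ℕ∞) γ) (q v : Fin n → ℝ) (A : Fin k) (i : Fin n) :
    fderiv ℝ (fun q => γ q A i) q v = fderiv ℝ γ q v A i := by
  have hd : DifferentiableAt ℝ γ q := hγ.differentiable (by simp) q
  let e : (Fin k → Fin n → ℝ) →L[ℝ] ℝ :=
    (ContinuousLinearMap.proj i : (Fin n → ℝ) →L[ℝ] ℝ).comp
      (ContinuousLinearMap.proj A : (Fin k → Fin n → ℝ) →L[ℝ] (Fin n → ℝ))
  have h1 : fderiv ℝ (fun q => e (γ q)) q = e.comp (fderiv ℝ γ q) :=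
    (e.hasFDerivAt.comp q hd.hasFDerivAt).fderiv
  have := congrFun (congrArg DFunLike.coe h1) v
  simpa [e] using this

lemma HJ_identity {n k : ℕ} {H : Phase n k → ℝ} (hH : ContDiff ℝ (⊤ : ℕ∞) H)
    {γ : (Fin n → ℝ) → (Fin k → Fin n → ℝ)} (hγ : ContDiff ℝ (⊤ : ℕ∞) γ)
    (hHJ : ∀ q : Fin n → ℝ, fderiv ℝ (fun q => H (q, γ q)) q = 0)
    (q : Fin n → ℝ) (i : Fin n) :
    Hq H (q, γ q) i
      + ∑ A, ∑ j, fderiv ℝ (fun q => γ q A j) q (Pi.single i 1) * Hp H (q, γ q) A j = 0 := by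
  have hdγ : DifferentiableAt ℝ γ q := hγ.differentiable (by simp) q
  have hdH : DifferentiableAt ℝ H (q, γ q) := hH.differentiable (by simp) (q, γ q)
  have hcomp : HasFDerivAt (fun q => H (q, γ q))
      ((fderiv ℝ H (q, γ q)).comp
        ((ContinuousLinearMap.id ℝ (Fin n → ℝ)).prod (fderiv ℝ γ q))) q :=
    hdH.hasFDerivAt.comp q ((hasFDerivAt_id q).prodMk hdγ.hasFDerivAt)
  have h0 : fderiv ℝ (fun q => H (q, γ q)) q (Pi.single i 1) = 0 := by
    rw [hHJ q]; rfl
  rw [hcomp.fderiv] at h0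
  have hsplit : ((Pi.single i 1, fderiv ℝ γ q (Pi.single i 1)) : Phase n k)
      = (Pi.single i 1, 0) + (0, fderiv ℝ γ q (Pi.single i 1)) := by
    simp
  have h0' : fderiv ℝ H (q, γ q) (Pi.single i 1, 0)
      + fderiv ℝ H (q, γ q) (0, fderiv ℝ γ q (Pi.single i 1)) = 0 := by
    rw [← map_add, ← hsplit]
    simpa using h0
  have hL : fderiv ℝ H (q, γ q) (0, fderiv ℝ γ q (Pi.single i 1))
      = ∑ A, ∑ j, fderiv ℝ γ q (Pi.single i 1) A j * Hp H (q, γ q) A j := by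
    let L : (Fin k → Fin n → ℝ) →L[ℝ] ℝ :=
      (fderiv ℝ H (q, γ q)).comp (ContinuousLinearMap.inr ℝ (Fin n → ℝ) (Fin k → Fin n → ℝ))
    have : L (fderiv ℝ γ q (Pi.single i 1))
        = ∑ A, ∑ j, fderiv ℝ γ q (Pi.single i 1) A j * L (Pi.single A (Pi.single j 1)) :=
      clm_pi L _
    simpa [L, Hp] using this
  have heq : ∀ A j, fderiv ℝ γ q (Pi.single i 1) A j
      = fderiv ℝ (fun q => γ q A j) q (Pi.single i 1) := fun A j =>
    (fderiv_eval hγ q _ A j).symm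
  rw [hL] at h0'
  simp only [heq] at h0'
  exact h0'

lemma fderiv_eval1 {m n : ℕ} {σ : (Fin m → ℝ) → (Fin n → ℝ)} {t : Fin m → ℝ}
    (hd : DifferentiableAt ℝ σ t) (v : Fin m → ℝ) (i : Fin n) :
    fderiv ℝ (fun s => σ s i) t v = fderiv ℝ σ t v i := by
  let e : (Fin n → ℝ) →L[ℝ] ℝ := ContinuousLinearMap.proj i
  have h1 : fderiv ℝ (fun s => e (σ s)) t = e.comp (fderiv ℝ σ t) :=
    (e.hasFDerivAt.comp t hd.hasFDerivAt).fderiv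
  have := congrFun (congrArg DFunLike.coe h1) v
  simpa [e] using this


/-- If `d(H ∘ γ̃) = 0` then `γ̃ ∘ σ` satisfies the Hamilton
field equations for every integral section `σ` of `Z^γ`. -/
theorem hamilton_jacobi_sufficiency {n k : ℕ}
    (H : Phase n k → ℝ) (hH : ContDiff ℝ (⊤ : ℕ∞) H)
    (Z : Fin k → Phase n k → Phase n k) (hZsm : ∀ A, ContDiff ℝ (⊤ : ℕ∞) (Z A))
    (hZ : HamEqs H Z)
    (γ : (Fin n → ℝ) → (Fin k → Fin n → ℝ)) (hγ : ClosedSection γ)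
    (hHJ : ∀ q : Fin n → ℝ, fderiv ℝ (fun q => H (q, γ q)) q = 0) :
    ∀ U σ, IsIntegralSection (fun A q => (Z A (q, γ q)).1) U σ →
      HamFieldEqs H U (fun t => (σ t, γ (σ t))) := by
  rintro U σ ⟨hU, hσC1, hσint⟩
  obtain ⟨hγsm, hγcl⟩ := hγ
  intro t ht
  have hσd : DifferentiableAt ℝ σ t :=
    (hσC1.contDiffAt (hU.mem_nhds ht)).differentiableAt one_ne_zero
  set q : Fin n → ℝ := σ t with hq
  have hX : ∀ A, (Z A (q, γ q)).1 = fun j => Hp H (q, γ q) A j := by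
    intro A; funext j; exact (hZ (q, γ q)).1 A j
  have hgdiff : ∀ (A : Fin k) (i : Fin n), DifferentiableAt ℝ (fun q' => γ q' A i) q := by
    intro A i
    have he : ContDiff ℝ (⊤ : ℕ∞) (fun P : Fin k → Fin n → ℝ => P A i) :=
      ((ContinuousLinearMap.proj i : (Fin n → ℝ) →L[ℝ] ℝ).comp
        (ContinuousLinearMap.proj A : (Fin k → Fin n → ℝ) →L[ℝ] (Fin n → ℝ))).contDiff
    exact ((he.comp hγsm).differentiable (by simp)) q
  constructor
  · intro A i
    show fderiv ℝ (fun s => σ s i) t (Pi.single A 1) = Hp H (q, γ q) A i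
    rw [fderiv_eval1 hσd, hσint t ht A]
    exact (hZ (q, γ q)).1 A i
  · intro i
    show ∑ A, fderiv ℝ (fun s => γ (σ s) A i) t (Pi.single A 1) = - Hq H (q, γ q) i
    have hchain : ∀ A : Fin k, fderiv ℝ (fun s => γ (σ s) A i) t (Pi.single A 1)
        = ∑ j, Hp H (q, γ q) A j * fderiv ℝ (fun q' => γ q' A i) q (Pi.single j 1) := by
      intro A
      have hc : fderiv ℝ (fun s => γ (σ s) A i) t
          = (fderiv ℝ (fun q' => γ q' A i) q).comp (fderiv ℝ σ t) :=
        ((hgdiff A i).hasFDerivAt.comp t hσd.hasFDerivAt).fderiv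
      rw [hc]
      simp only [ContinuousLinearMap.coe_comp', Function.comp_apply]
      rw [hσint t ht A]
      show (fderiv ℝ (fun q' => γ q' A i) q) ((Z A (q, γ q)).1)
          = ∑ j, Hp H (q, γ q) A j * fderiv ℝ (fun q' => γ q' A i) q (Pi.single j 1)
      rw [hX A, clm_vec]
    rw [Finset.sum_congr rfl (fun A _ => hchain A)]
    have hswap : ∀ (A : Fin k) (j : Fin n),
        fderiv ℝ (fun q' => γ q' A i) q (Pi.single j 1)
          = fderiv ℝ (fun q' => γ q' A j) q (Pi.single i 1) := fun A j => hγcl q A i j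
    have hHJi := HJ_identity hH hγsm hHJ q i
    calc ∑ A, ∑ j, Hp H (q, γ q) A j * fderiv ℝ (fun q' => γ q' A i) q (Pi.single j 1)
        = ∑ A, ∑ j, fderiv ℝ (fun q' => γ q' A j) q (Pi.single i 1) * Hp H (q, γ q) A j := by
          refine Finset.sum_congr rfl fun A _ => Finset.sum_congr rfl fun j _ => ?_
          rw [hswap A j, mul_comm]
      _ = - Hq H (q, γ q) i := by linarith
end
end

section
/- Let Z be a solution of the Hamilton equations and γ a closed section. Then the following are equivalent: (i) for every q ∈ ℝ^n, the k-tuple of tangent vectors (Z_A(γ̃(q)) − Dγ̃(q)(Z^γ_A(q)))_{A ∈ Fin k} lies in the kernel of ♭, i.e., Σ_A ω^A(Z_A(γ̃(q)) − Dγ̃(q)(Z^γ_A(q)), v) = 0 for every v ∈ ℝ^n × M, where Dγ̃(q) : ℝ^n → ℝ^n × M is the Fréchet derivative of γ̃ at q and Z^γ_A(q) ∈ ℝ^n is the vector with components Z_A^i(γ̃(q)); (ii) d(H ∘ γ̃) = 0, i.e., the derivative of H ∘ γ̃ : ℝ^n → ℝ vanishes identically. -/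
open scoped BigOperators

noncomputable section

lemma pi_expand {n : ℕ} (u : Fin n → ℝ) :
    u = ∑ i, u i • (Pi.single i (1:ℝ) : Fin n → ℝ) := by
  simp [← Pi.single_smul, Finset.univ_sum_single]

lemma pi2_expand {n k : ℕ} (P : Fin k → Fin n → ℝ) :
    P = ∑ A, ∑ i, P A i • (Pi.single A (Pi.single i (1:ℝ) : Fin n → ℝ) : Fin k → Fin n → ℝ) := by
  funext B j
  rw [Finset.sum_apply]
  simp only [Finset.sum_apply, Pi.smul_apply, Pi.single_apply, smul_eq_mul,
    mul_ite, mul_one, mul_zero, apply_ite (fun f : Fin n → ℝ => f j),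
    Pi.zero_apply]
  simp [Pi.single_apply, Finset.sum_ite_eq', mul_ite]

/-- `Z ∘ γ̃ − Tγ̃(Z^γ) ∈ ker ♭` iff `d(H ∘ γ̃) = 0`. -/
theorem hamilton_jacobi_kernel_iff {n k : ℕ}
    (H : Phase n k → ℝ) (hH : ContDiff ℝ (⊤ : ℕ∞) H)
    (Z : Fin k → Phase n k → Phase n k) (hZsm : ∀ A, ContDiff ℝ (⊤ : ℕ∞) (Z A))
    (hZ : HamEqs H Z)
    (γ : (Fin n → ℝ) → (Fin k → Fin n → ℝ)) (hγ : ClosedSection γ) :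
    ((∀ (q : Fin n → ℝ) (v : Phase n k),
        ∑ A, omegaK A
          (Z A (q, γ q) - fderiv ℝ (fun q => ((q, γ q) : Phase n k)) q ((Z A (q, γ q)).1)) v
          = 0) ↔
      (∀ q : Fin n → ℝ, fderiv ℝ (fun q => H (q, γ q)) q = 0)) := by
  obtain ⟨hγsm, hγcl⟩ := hγ
  have hγd : Differentiable ℝ γ := hγsm.differentiable (by simp)
  have hHd : Differentiable ℝ H := hH.differentiable (by simp)
  -- derivative of γ̃
  have hAt : ∀ q : Fin n → ℝ, HasFDerivAt (fun q => ((q, γ q) : Phase n k))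
      ((ContinuousLinearMap.id ℝ (Fin n → ℝ)).prod (fderiv ℝ γ q)) q :=
    fun q => (hasFDerivAt_id q).prodMk (hγd q).hasFDerivAt
  have hA : ∀ (q u : Fin n → ℝ),
      fderiv ℝ (fun q => ((q, γ q) : Phase n k)) q u = (u, fderiv ℝ γ q u) := by
    intro q u; rw [(hAt q).fderiv]; rfl
  -- component derivatives of γ
  have hB : ∀ (q : Fin n → ℝ) (A : Fin k) (i : Fin n) (u : Fin n → ℝ),
      fderiv ℝ γ q u A i = fderiv ℝ (fun q => γ q A i) q u := by
    intro q A i u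
    have h1 : HasFDerivAt (fun q => γ q A i)
        (((ContinuousLinearMap.proj i).comp
            (ContinuousLinearMap.proj (R := ℝ) (φ := fun _ : Fin k => Fin n → ℝ) A)).comp
          (fderiv ℝ γ q)) q :=
      (((ContinuousLinearMap.proj i).comp
          (ContinuousLinearMap.proj (R := ℝ) (φ := fun _ : Fin k => Fin n → ℝ) A)).hasFDerivAt).comp
        q (hγd q).hasFDerivAt
    rw [h1.fderiv]; rfl
  -- expansion of dH
  have hD : ∀ (z : Phase n k) (u : Fin n → ℝ) (P : Fin k → Fin n → ℝ),
      fderiv ℝ H z (u, P)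
        = (∑ i, u i * Hq H z i) + ∑ A, ∑ i, P A i * Hp H z A i := by
    intro z u P
    have hsplit : ((u, P) : Phase n k)
        = (∑ i, u i • (((Pi.single i (1:ℝ) : Fin n → ℝ), (0 : Fin k → Fin n → ℝ)) : Phase n k))
          + ∑ A, ∑ i, P A i • ((((0 : Fin n → ℝ)),
              (Pi.single A (Pi.single i (1:ℝ) : Fin n → ℝ) : Fin k → Fin n → ℝ)) : Phase n k) := by
      rw [Prod.ext_iff]
      constructor
      · simp only [Prod.fst_add, Prod.fst_sum, Prod.smul_fst, smul_zero]
        simpa using pi_expand u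
      · simp only [Prod.snd_add, Prod.snd_sum, Prod.smul_snd, smul_zero]
        simpa using pi2_expand P
    rw [hsplit, map_add]
    simp only [map_sum, map_smul, smul_eq_mul]
    rfl
  -- chain rule
  have hC : ∀ (q u : Fin n → ℝ), fderiv ℝ (fun q => H (q, γ q)) q u
      = fderiv ℝ H (q, γ q) (u, fderiv ℝ γ q u) := by
    intro q u
    have hcomp : fderiv ℝ (fun q => H (q, γ q)) q
        = (fderiv ℝ H (q, γ q)).comp (fderiv ℝ (fun q => ((q, γ q) : Phase n k)) q) := by
      rw [show (fun q => H (q, γ q)) = H ∘ (fun q => ((q, γ q) : Phase n k)) from rfl]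
      exact fderiv_comp q (hHd _) (hAt q).differentiableAt
    rw [hcomp, ContinuousLinearMap.comp_apply, hA]
  -- key identity
  have key : ∀ (q : Fin n → ℝ) (i : Fin n),
      (∑ A, ((Z A (q, γ q)).2 A i - fderiv ℝ γ q ((Z A (q, γ q)).1) A i))
        = - fderiv ℝ (fun q => H (q, γ q)) q (Pi.single i 1) := by
    intro q i
    set z : Phase n k := (q, γ q) with hz
    have h1 : ∀ A : Fin k, fderiv ℝ γ q ((Z A z).1) A i
        = ∑ j, Hp H z A j * fderiv ℝ (fun q => γ q A j) q (Pi.single i 1) := by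
      intro A
      rw [hB]
      have : fderiv ℝ (fun q => γ q A i) q ((Z A z).1)
          = ∑ j, (Z A z).1 j * fderiv ℝ (fun q => γ q A i) q (Pi.single j 1) := by
        conv_lhs => rw [pi_expand ((Z A z).1)]
        rw [map_sum]
        simp [smul_eq_mul]
      rw [this]
      apply Finset.sum_congr rfl; intro j _
      rw [(hZ z).1 A j, hγcl q A i j]
    have h2 : fderiv ℝ (fun q => H (q, γ q)) q (Pi.single i 1)
        = Hq H z i + ∑ A, ∑ j, Hp H z A j * fderiv ℝ (fun q => γ q A j) q (Pi.single i 1) := by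
      rw [hC, hD]
      congr 1
      · rw [Finset.sum_eq_single i]
        · simp [hz]
        · intro b _ hb; simp [Pi.single_apply, hb]
        · simp
      · apply Finset.sum_congr rfl; intro A _
        apply Finset.sum_congr rfl; intro j _
        rw [hB, mul_comm]
    rw [Finset.sum_sub_distrib, (hZ z).2 i, h2]
    simp only [h1]
    ring
  -- simplification of omega sum
  have homega : ∀ (q : Fin n → ℝ) (v : Phase n k),
      (∑ A, omegaK A
          (Z A (q, γ q) - fderiv ℝ (fun q => ((q, γ q) : Phase n k)) q ((Z A (q, γ q)).1)) v)
        = - ∑ i, v.1 i *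
            (∑ A, ((Z A (q, γ q)).2 A i - fderiv ℝ γ q ((Z A (q, γ q)).1) A i)) := by
    intro q v
    simp only [omegaK, hA, Prod.fst_sub, Prod.snd_sub, Pi.sub_apply, sub_self,
      zero_mul, zero_sub]
    rw [Finset.sum_comm]
    rw [← Finset.sum_neg_distrib]
    apply Finset.sum_congr rfl; intro i _
    rw [Finset.mul_sum, ← Finset.sum_neg_distrib]
  constructor
  · intro h q
    have hS : ∀ i : Fin n,
        (∑ A, ((Z A (q, γ q)).2 A i - fderiv ℝ γ q ((Z A (q, γ q)).1) A i)) = 0 := by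
      intro i
      have := h q ((Pi.single i 1 : Fin n → ℝ), (0 : Fin k → Fin n → ℝ))
      rw [homega] at this
      have := neg_eq_zero.mp this
      rw [Finset.sum_eq_single i] at this
      · simpa using this
      · intro b _ hb; simp [Pi.single_apply, hb]
      · simp
    ext v
    rw [ContinuousLinearMap.zero_apply]
    conv_lhs => rw [pi_expand v, map_sum]
    apply Finset.sum_eq_zero; intro i _
    rw [map_smul, smul_eq_mul]
    have hk := key q i
    rw [hS i] at hk
    have : fderiv ℝ (fun q => H (q, γ q)) q (Pi.single i 1) = 0 := by linarith
    rw [this, mul_zero]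
  · intro h q v
    rw [homega]
    apply neg_eq_zero.mpr
    apply Finset.sum_eq_zero; intro i _
    rw [key q i, h q]
    simp
end
end

section
/- Let Z be a solution of the Hamilton equations and γ a closed section, and assume the projected k-vector field Z^γ on ℝ^n, with components (Z^γ_A)^i = Z_A^i ∘ γ̃, is integrable. Then the following are equivalent: (i) for every q ∈ ℝ^n and every v ∈ ℝ^n × M, Σ_A ω^A(Z_A(γ̃(q)) − Dγ̃(q)(Z^γ_A(q)), v) = 0, where Dγ̃(q) : ℝ^n → ℝ^n × M is the Fréchet derivative of γ̃ at q; (ii) d(H ∘ γ̃) = 0, i.e., the derivative of H ∘ γ̃ : ℝ^n → ℝ vanishes identically; (iii) for every integral section σ of Z^γ, the map γ̃ ∘ σ = (σ, γ ∘ σ) satisfies the Hamilton field equations. -/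
open scoped BigOperators

noncomputable section

section HJhelpers

variable {n k : ℕ}

lemma clm_pi_expand {M : Type*} [AddCommGroup M] [Module ℝ M]
    [TopologicalSpace M] (L : (Fin n → ℝ) →L[ℝ] M) (u : Fin n → ℝ) :
    L u = ∑ i, u i • L (Pi.single i 1) := by
  have : u = ∑ i, u i • (Pi.single i 1 : Fin n → ℝ) := by
    funext j
    simp [Finset.sum_apply, Pi.single_apply, Finset.sum_ite_eq']
  calc L u = L (∑ i, u i • (Pi.single i 1 : Fin n → ℝ)) := by rw [← this]
    _ = ∑ i, u i • L (Pi.single i 1) := by simp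

lemma clm_expand (L : Phase n k →L[ℝ] ℝ) (u : Fin n → ℝ) (P : Fin k → Fin n → ℝ) :
    L (u, P) = ∑ i, u i * L (Pi.single i 1, 0)
      + ∑ A, ∑ i, P A i * L (0, Pi.single A (Pi.single i 1)) := by
  have h1 : ((u, P) : Phase n k) = (u, 0) + (0, P) := by simp
  have h2 : ((u, 0) : Phase n k) = ∑ i, u i • ((Pi.single i 1, 0) : Phase n k) := by
    ext j
    · simp [Finset.sum_apply, Pi.single_apply, Finset.sum_ite_eq', Prod.fst_sum]
    · simp [Prod.snd_sum]
  have h3 : ((0, P) : Phase n k)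
      = ∑ A, ∑ i, P A i • ((0, Pi.single A (Pi.single i 1)) : Phase n k) := by
    ext j l
    · simp [Prod.fst_sum]
    · simp only [Prod.snd_sum, Finset.sum_apply, Prod.smul_snd, Pi.smul_apply]
      rw [Finset.sum_comm]
      simp [Pi.single_apply, Finset.sum_ite_eq', mul_ite, ite_apply, Finset.sum_ite_eq]
  rw [h1, map_add, h2, h3, map_sum]
  simp_rw [map_sum]
  congr 1
  · exact Finset.sum_congr rfl fun i _ => by rw [map_smul, smul_eq_mul]
  · exact Finset.sum_congr rfl fun A _ => Finset.sum_congr rfl fun i _ => by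
      rw [map_smul, smul_eq_mul]

lemma hasFDerivAt_eval1 {E : Type*} [NormedAddCommGroup E] [NormedSpace ℝ E]
    (g : E → (Fin n → ℝ)) {x : E} (hg : DifferentiableAt ℝ g x) (i : Fin n) :
    HasFDerivAt (fun x => g x i)
      ((ContinuousLinearMap.proj i).comp (fderiv ℝ g x)) x :=
  ((ContinuousLinearMap.proj i : (Fin n → ℝ) →L[ℝ] ℝ).hasFDerivAt (x := g x)).comp x hg.hasFDerivAt

lemma hasFDerivAt_eval2 {E : Type*} [NormedAddCommGroup E] [NormedSpace ℝ E]
    (g : E → (Fin k → Fin n → ℝ)) {x : E} (hg : DifferentiableAt ℝ g x)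
    (A : Fin k) (i : Fin n) :
    HasFDerivAt (fun x => g x A i)
      (((ContinuousLinearMap.proj i).comp
        (ContinuousLinearMap.proj A : (Fin k → Fin n → ℝ) →L[ℝ] (Fin n → ℝ))).comp
        (fderiv ℝ g x)) x := by
  have h := ((ContinuousLinearMap.proj i).comp
    (ContinuousLinearMap.proj A : (Fin k → Fin n → ℝ) →L[ℝ] (Fin n → ℝ))).hasFDerivAt
    (x := g x)
  exact h.comp x hg.hasFDerivAt

end HJhelpers


/-- For integrable `Z^γ`, the three conditions of the
Hamilton–Jacobi theorem are equivalent. -/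
theorem hamilton_jacobi_three_equivalences {n k : ℕ}
    (H : Phase n k → ℝ) (hH : ContDiff ℝ (⊤ : ℕ∞) H)
    (Z : Fin k → Phase n k → Phase n k) (hZsm : ∀ A, ContDiff ℝ (⊤ : ℕ∞) (Z A))
    (hZ : HamEqs H Z)
    (γ : (Fin n → ℝ) → (Fin k → Fin n → ℝ)) (hγ : ClosedSection γ)
    (hInt : Integrable (fun A q => (Z A (q, γ q)).1)) :
    ((∀ (q : Fin n → ℝ) (v : Phase n k),
        ∑ A, omegaK A
          (Z A (q, γ q) - fderiv ℝ (fun q => ((q, γ q) : Phase n k)) q ((Z A (q, γ q)).1)) v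
          = 0) ↔
      (∀ q : Fin n → ℝ, fderiv ℝ (fun q => H (q, γ q)) q = 0)) ∧
    ((∀ q : Fin n → ℝ, fderiv ℝ (fun q => H (q, γ q)) q = 0) ↔
      (∀ U σ, IsIntegralSection (fun A q => (Z A (q, γ q)).1) U σ →
        HamFieldEqs H U (fun t => (σ t, γ (σ t))))) := by
  obtain ⟨hγsm, hcl⟩ := hγ
  have hγd : Differentiable ℝ γ := hγsm.differentiable (by simp)
  have hHd : Differentiable ℝ H := hH.differentiable (by simp)
  have hγAi : ∀ (q : Fin n → ℝ) (A : Fin k) (i : Fin n),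
      DifferentiableAt ℝ (fun q => γ q A i) q :=
    fun q A i => (hasFDerivAt_eval2 γ (hγd q) A i).differentiableAt
  have hF3 : ∀ (q u : Fin n → ℝ) (A : Fin k) (i : Fin n),
      fderiv ℝ (fun q => γ q A i) q u = fderiv ℝ γ q u A i := by
    intro q u A i
    rw [(hasFDerivAt_eval2 γ (hγd q) A i).fderiv]
    rfl
  have hzt : ∀ q : Fin n → ℝ, HasFDerivAt (fun q => ((q, γ q) : Phase n k))
      ((ContinuousLinearMap.id ℝ (Fin n → ℝ)).prod (fderiv ℝ γ q)) q :=
    fun q => HasFDerivAt.prodMk (hasFDerivAt_id q) (hγd q).hasFDerivAt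
  -- (i) ↔ core condition
  have iff1 : (∀ (q : Fin n → ℝ) (v : Phase n k),
      ∑ A, omegaK A
        (Z A (q, γ q) - fderiv ℝ (fun q => ((q, γ q) : Phase n k)) q ((Z A (q, γ q)).1)) v
        = 0) ↔ (∀ (q : Fin n → ℝ) (i : Fin n),
      ∑ A, fderiv ℝ (fun q' => γ q' A i) q ((Z A (q, γ q)).1) = - Hq H (q, γ q) i) := by
    have key : ∀ (q : Fin n → ℝ) (v : Phase n k),
        ∑ A, omegaK A
          (Z A (q, γ q) - fderiv ℝ (fun q => ((q, γ q) : Phase n k)) q ((Z A (q, γ q)).1)) v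
        = - ∑ i, v.1 i *
            (∑ A, ((Z A (q, γ q)).2 A i - fderiv ℝ γ q ((Z A (q, γ q)).1) A i)) := by
      intro q v
      rw [(hzt q).fderiv]
      simp only [omegaK, Prod.fst_sub, Prod.snd_sub, ContinuousLinearMap.prod_apply,
        ContinuousLinearMap.coe_id', id_eq, Pi.sub_apply, sub_self, zero_mul, zero_sub]
      rw [Finset.sum_comm]
      simp [Finset.sum_neg_distrib, Finset.mul_sum, mul_sub, Finset.sum_sub_distrib]
    have Dcongr : ∀ (q : Fin n → ℝ) (i : Fin n),
        ∑ A, fderiv ℝ γ q ((Z A (q, γ q)).1) A i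
          = ∑ A, fderiv ℝ (fun q' => γ q' A i) q ((Z A (q, γ q)).1) :=
      fun q i => Finset.sum_congr rfl fun A _ => (hF3 q _ A i).symm
    constructor
    · intro h q i
      have h0 := h q (Pi.single i 1, 0)
      rw [key, neg_eq_zero] at h0
      have h1 : ∑ A, ((Z A (q, γ q)).2 A i - fderiv ℝ γ q ((Z A (q, γ q)).1) A i) = 0 := by
        simpa [Pi.single_apply, Finset.sum_ite_eq', ite_mul] using h0
      rw [Finset.sum_sub_distrib, sub_eq_zero] at h1
      rw [← Dcongr q i, ← h1]
      exact (hZ (q, γ q)).2 i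
    · intro h q v
      rw [key, neg_eq_zero]
      apply Finset.sum_eq_zero
      intro i _
      have h1 : ∑ A, ((Z A (q, γ q)).2 A i - fderiv ℝ γ q ((Z A (q, γ q)).1) A i) = 0 := by
        rw [Finset.sum_sub_distrib, sub_eq_zero, (hZ (q, γ q)).2 i, Dcongr q i, h q i]
      rw [h1, mul_zero]
  -- value of d(H ∘ γ̃) on basis vectors
  have hval : ∀ (q : Fin n → ℝ) (i : Fin n),
      fderiv ℝ (fun q => H (q, γ q)) q (Pi.single i 1)
        = Hq H (q, γ q) i + ∑ A, fderiv ℝ (fun q' => γ q' A i) q ((Z A (q, γ q)).1) := by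
    intro q i
    have hc : HasFDerivAt (fun q => H (q, γ q))
        ((fderiv ℝ H (q, γ q)).comp
          ((ContinuousLinearMap.id ℝ (Fin n → ℝ)).prod (fderiv ℝ γ q))) q :=
      ((hHd (q, γ q)).hasFDerivAt).comp q (hzt q)
    rw [hc.fderiv]
    simp only [ContinuousLinearMap.coe_comp', Function.comp_apply,
      ContinuousLinearMap.prod_apply, ContinuousLinearMap.coe_id', id_eq]
    rw [clm_expand]
    congr 1
    · simp [Hq, Pi.single_apply, Finset.sum_ite_eq', ite_mul]
    · refine Finset.sum_congr rfl fun A _ => ?_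
      rw [clm_pi_expand (fderiv ℝ (fun q' => γ q' A i) q) ((Z A (q, γ q)).1)]
      refine Finset.sum_congr rfl fun j _ => ?_
      rw [smul_eq_mul, mul_comm]
      congr 1
      · exact ((hZ (q, γ q)).1 A j).symm
      · rw [← hF3 q (Pi.single i 1) A j]
        exact (hcl q A i j).symm
  -- (ii) ↔ core condition
  have iff2 : (∀ q : Fin n → ℝ, fderiv ℝ (fun q => H (q, γ q)) q = 0)
      ↔ (∀ (q : Fin n → ℝ) (i : Fin n),
      ∑ A, fderiv ℝ (fun q' => γ q' A i) q ((Z A (q, γ q)).1) = - Hq H (q, γ q) i) := by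
    constructor
    · intro h q i
      have h0 : fderiv ℝ (fun q => H (q, γ q)) q (Pi.single i 1) = 0 := by
        rw [h q]; rfl
      rw [hval q i] at h0
      linarith
    · intro h q
      refine ContinuousLinearMap.ext fun u => ?_
      rw [clm_pi_expand (fderiv ℝ (fun q => H (q, γ q)) q) u]
      have hz : ∀ i : Fin n, fderiv ℝ (fun q => H (q, γ q)) q (Pi.single i 1) = 0 := by
        intro i
        rw [hval q i, h q i]
        ring
      simp [hz]
  -- core condition ↔ (iii)
  have iff3 : (∀ (q : Fin n → ℝ) (i : Fin n),
      ∑ A, fderiv ℝ (fun q' => γ q' A i) q ((Z A (q, γ q)).1) = - Hq H (q, γ q) i)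
      ↔ (∀ U σ, IsIntegralSection (fun A q => (Z A (q, γ q)).1) U σ →
        HamFieldEqs H U (fun t => (σ t, γ (σ t)))) := by
    constructor
    · rintro h U σ ⟨hU, hσ, hder⟩ t ht
      have hσd : DifferentiableAt ℝ σ t :=
        (hσ.differentiableOn one_ne_zero).differentiableAt (hU.mem_nhds ht)
      constructor
      · intro A i
        show fderiv ℝ (fun s => σ s i) t (Pi.single A 1) = Hp H (σ t, γ (σ t)) A i
        rw [(hasFDerivAt_eval1 σ hσd i).fderiv]
        simp only [ContinuousLinearMap.coe_comp', Function.comp_apply,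
          ContinuousLinearMap.proj_apply]
        rw [hder t ht A]
        exact (hZ (σ t, γ (σ t))).1 A i
      · intro i
        have hterm : ∀ A : Fin k,
            fderiv ℝ (fun s => γ (σ s) A i) t (Pi.single A 1)
              = fderiv ℝ (fun q' => γ q' A i) (σ t) ((Z A (σ t, γ (σ t))).1) := by
          intro A
          have hc : HasFDerivAt (fun s => γ (σ s) A i)
              ((fderiv ℝ (fun q' => γ q' A i) (σ t)).comp (fderiv ℝ σ t)) t :=
            ((hγAi (σ t) A i).hasFDerivAt).comp t hσd.hasFDerivAt
          rw [hc.fderiv]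
          simp only [ContinuousLinearMap.coe_comp', Function.comp_apply]
          rw [hder t ht A]
        show (∑ A, fderiv ℝ (fun s => γ (σ s) A i) t (Pi.single A 1))
            = - Hq H (σ t, γ (σ t)) i
        rw [Finset.sum_congr rfl fun A _ => hterm A]
        exact h (σ t) i
    · intro h q
      obtain ⟨U, σ, hIS, h0U, hσ0⟩ := hInt q
      obtain ⟨hU, hσ, hder⟩ := hIS
      have hfe := (h U σ ⟨hU, hσ, hder⟩ 0 h0U).2
      intro i
      have hσd : DifferentiableAt ℝ σ 0 :=
        (hσ.differentiableOn one_ne_zero).differentiableAt (hU.mem_nhds h0U)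
      have hterm : ∀ A : Fin k,
          fderiv ℝ (fun s => γ (σ s) A i) 0 (Pi.single A 1)
            = fderiv ℝ (fun q' => γ q' A i) q ((Z A (q, γ q)).1) := by
        intro A
        have hc : HasFDerivAt (fun s => γ (σ s) A i)
            ((fderiv ℝ (fun q' => γ q' A i) (σ 0)).comp (fderiv ℝ σ 0)) 0 :=
          ((hγAi (σ 0) A i).hasFDerivAt).comp 0 hσd.hasFDerivAt
        rw [hc.fderiv]
        simp only [ContinuousLinearMap.coe_comp', Function.comp_apply]
        rw [hder 0 h0U A, hσ0]
      have h2 : (∑ A, fderiv ℝ (fun s => γ (σ s) A i) 0 (Pi.single A 1))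
          = - Hq H (σ 0, γ (σ 0)) i := hfe i
      rw [hσ0] at h2
      calc ∑ A, fderiv ℝ (fun q' => γ q' A i) q ((Z A (q, γ q)).1)
          = ∑ A, fderiv ℝ (fun s => γ (σ s) A i) 0 (Pi.single A 1) :=
            (Finset.sum_congr rfl fun A _ => (hterm A).symm)
        _ = - Hq H (q, γ q) i := h2
  exact ⟨iff1.trans iff2.symm, iff2.trans iff3⟩
end
end

section
/- Let Z be a solution of the Hamilton equations and γ a closed section. If Z and the projected k-vector field Z^γ (with components (Z^γ_A)^i = Z_A^i ∘ γ̃) are γ̃-related, i.e., Z_A(γ̃(q)) = Dγ̃(q)(Z^γ_A(q)) for every A ∈ Fin k and every q ∈ ℝ^n, where Dγ̃(q) : ℝ^n → ℝ^n × M is the Fréchet derivative of γ̃ at q, then d(H ∘ γ̃) = 0, i.e., the derivative of H ∘ γ̃ : ℝ^n → ℝ vanishes identically. -/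
open scoped BigOperators

noncomputable section

lemma aux_vec_decomp {n : ℕ} (v : Fin n → ℝ) :
    v = ∑ i, v i • (Pi.single i (1:ℝ) : Fin n → ℝ) := by
  simp [← Pi.single_smul, smul_eq_mul, Finset.univ_sum_single]

lemma aux_clm_pi {n : ℕ} {E : Type*} [NormedAddCommGroup E] [NormedSpace ℝ E]
    (L : (Fin n → ℝ) →L[ℝ] E) (v : Fin n → ℝ) :
    L v = ∑ i, v i • L (Pi.single i 1) := by
  conv_lhs => rw [aux_vec_decomp v]
  simp only [map_sum, map_smul]

lemma aux_decomp {n k : ℕ} (v : Fin n → ℝ) (w : Fin k → Fin n → ℝ) :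
    ((v, w) : Phase n k) = (∑ i, v i • ((Pi.single i 1, 0) : Phase n k))
      + ∑ A, ∑ i, w A i • ((0, Pi.single A (Pi.single i 1)) : Phase n k) := by
  apply Prod.ext <;> simp [Prod.fst_sum, Prod.snd_sum] <;>
    simp [← Pi.single_smul, smul_eq_mul, Finset.univ_sum_single]
  funext B j
  simp [Finset.sum_apply, Pi.single_apply, apply_ite (fun f : Fin n → ℝ => f j)]

lemma aux_clm_decomp {n k : ℕ} (L : Phase n k →L[ℝ] ℝ) (v : Fin n → ℝ)
    (w : Fin k → Fin n → ℝ) :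
    L (v, w) = ∑ i, v i * L (Pi.single i 1, 0)
      + ∑ A, ∑ i, w A i * L (0, Pi.single A (Pi.single i 1)) := by
  conv_lhs => rw [aux_decomp v w]
  simp only [map_add, map_sum, map_smul, smul_eq_mul]

lemma aux_comp_fderiv {n k : ℕ} (γ : (Fin n → ℝ) → (Fin k → Fin n → ℝ))
    (hγ : Differentiable ℝ γ) (q v : Fin n → ℝ) (A : Fin k) (i : Fin n) :
    fderiv ℝ γ q v A i = fderiv ℝ (fun q => γ q A i) q v := by
  have e : (fun q => γ q A i) =
      ((ContinuousLinearMap.proj i).comp (ContinuousLinearMap.proj A :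
        (Fin k → Fin n → ℝ) →L[ℝ] (Fin n → ℝ))) ∘ γ := rfl
  rw [e]
  have h := (((ContinuousLinearMap.proj (R := ℝ) (φ := fun _ : Fin n => ℝ) i).comp
      (ContinuousLinearMap.proj A : (Fin k → Fin n → ℝ) →L[ℝ] (Fin n → ℝ))).hasFDerivAt.comp q
      (hγ q).hasFDerivAt).fderiv
  rw [h]; rfl

/-- If `Z` and `Z^γ` are `γ̃`-related then `d(H ∘ γ̃) = 0`. -/
theorem gamma_related_implies_hamilton_jacobi {n k : ℕ}
    (H : Phase n k → ℝ) (hH : ContDiff ℝ (⊤ : ℕ∞) H)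
    (Z : Fin k → Phase n k → Phase n k) (hZsm : ∀ A, ContDiff ℝ (⊤ : ℕ∞) (Z A))
    (hZ : HamEqs H Z)
    (γ : (Fin n → ℝ) → (Fin k → Fin n → ℝ)) (hγ : ClosedSection γ)
    (hrel : ∀ (A : Fin k) (q : Fin n → ℝ),
      Z A (q, γ q) = fderiv ℝ (fun q => ((q, γ q) : Phase n k)) q ((Z A (q, γ q)).1)) :
    ∀ q : Fin n → ℝ, fderiv ℝ (fun q => H (q, γ q)) q = 0 := by
  intro q
  have hγd : Differentiable ℝ γ := hγ.1.differentiable (by simp)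
  have hHd : Differentiable ℝ H := hH.differentiable (by simp)
  set z : Phase n k := (q, γ q) with hzdef
  set G := fderiv ℝ γ q with hG
  set D := fderiv ℝ H z with hD
  -- derivative of γ̃
  have hGt : HasFDerivAt (fun q => ((q, γ q) : Phase n k))
      ((ContinuousLinearMap.id ℝ (Fin n → ℝ)).prod G) q :=
    HasFDerivAt.prodMk (hasFDerivAt_id q) (hγd q).hasFDerivAt
  have hchain : fderiv ℝ (fun q => H (q, γ q)) q =
      D.comp ((ContinuousLinearMap.id ℝ (Fin n → ℝ)).prod G) :=
    ((hHd z).hasFDerivAt.comp q hGt).fderiv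
  rw [hchain]
  -- the key: each basis direction gives 0
  have hbasis : ∀ j : Fin n,
      (D.comp ((ContinuousLinearMap.id ℝ (Fin n → ℝ)).prod G)) (Pi.single j 1) = 0 := by
    intro j
    have h1 : (D.comp ((ContinuousLinearMap.id ℝ (Fin n → ℝ)).prod G)) (Pi.single j 1)
        = D (Pi.single j 1, G (Pi.single j 1)) := rfl
    rw [h1, aux_clm_decomp]
    have h2 : ∑ i, (Pi.single j 1 : Fin n → ℝ) i * D (Pi.single i 1, 0) = Hq H z j := by
      rw [Finset.sum_eq_single j]
      · simp [Hq, hD]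
      · intro b _ hb; simp [Pi.single_apply, hb.symm]
      · simp
    rw [h2]
    -- second components of G in terms of partials, with closedness
    have h3 : ∀ (A : Fin k) (i : Fin n), G (Pi.single j 1) A i
        = fderiv ℝ (fun q => γ q A j) q (Pi.single i 1) := by
      intro A i
      rw [hG, aux_comp_fderiv γ hγd, hγ.2 q A i j]
    have h4 : ∑ A, ∑ i, G (Pi.single j 1) A i * D (0, Pi.single A (Pi.single i 1))
        = ∑ A, ∑ i, Hp H z A i * fderiv ℝ (fun q => γ q A j) q (Pi.single i 1) := by
      refine Finset.sum_congr rfl fun A _ => Finset.sum_congr rfl fun i _ => ?_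
      rw [h3 A i, mul_comm]; rfl
    rw [h4]
    -- from γ̃-relatedness and the Hamilton equations
    have h5 : ∀ A : Fin k, (Z A z).2 A j
        = ∑ i, Hp H z A i * fderiv ℝ (fun q => γ q A j) q (Pi.single i 1) := by
      intro A
      have hr := hrel A q
      have hfd : fderiv ℝ (fun q => ((q, γ q) : Phase n k)) q =
          (ContinuousLinearMap.id ℝ (Fin n → ℝ)).prod G := hGt.fderiv
      rw [hfd] at hr
      have h6 : (Z A z).2 A j = (G ((Z A z).1)) A j := by
        conv_lhs => rw [hr]
        rfl
      rw [h6, hG, aux_comp_fderiv γ hγd, aux_clm_pi]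
      refine Finset.sum_congr rfl fun i _ => ?_
      rw [(hZ z).1 A i, smul_eq_mul]
    have h7 : ∑ A, ∑ i, Hp H z A i * fderiv ℝ (fun q => γ q A j) q (Pi.single i 1)
        = - Hq H z j := by
      rw [← (hZ z).2 j]
      exact Finset.sum_congr rfl fun A _ => (h5 A).symm
    rw [h7]; ring
  -- extend from the basis to all vectors
  ext v
  have := aux_clm_pi (D.comp ((ContinuousLinearMap.id ℝ (Fin n → ℝ)).prod G)) v
  simp only [hbasis, smul_zero, Finset.sum_const_zero] at this
  simpa using this
end
end

section
/- Suppose L is regular. Let w ∈ T and let z_A = (u_A, V_A) ∈ ℝ^n × M be tangent vectors for A ∈ Fin k. Then the linear form ζ ↦ Σ_A ω_L^A(w)(z_A, ζ) vanishes identically if and only if u_A = 0 for all A and Σ_{A,B,j} (∂²L/∂v^j_B ∂v^i_A)(w) · (V_A)^j_B = 0 for all i. (Characterization of the kernel of ♭_L for a regular Lagrangian.) -/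
open scoped BigOperators

noncomputable section

/-- The velocity phase space `T = ℝ^n × M`, `M = (Fin k → Fin n → ℝ)`;
a point is `w = (q, v)` with components `q^i` and `v^i_A = w.2 A i`. -/
abbrev Vel (n k : ℕ) := (Fin n → ℝ) × (Fin k → Fin n → ℝ)

/-- `∂L/∂q^i` at `w`. -/
def Lq {n k : ℕ} (L : Vel n k → ℝ) (w : Vel n k) (i : Fin n) : ℝ :=
  fderiv ℝ L w (Pi.single i 1, 0)

/-- `∂L/∂v^i_A` at `w`. -/
def Lv {n k : ℕ} (L : Vel n k → ℝ) (w : Vel n k) (A : Fin k) (i : Fin n) : ℝ :=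
  fderiv ℝ L w (0, Pi.single A (Pi.single i 1))

/-- `∂²L/∂q^j ∂v^i_A` at `w`. -/
def Lqv {n k : ℕ} (L : Vel n k → ℝ) (w : Vel n k) (j : Fin n) (A : Fin k) (i : Fin n) : ℝ :=
  fderiv ℝ (fun w => Lv L w A i) w (Pi.single j 1, 0)

/-- `∂²L/∂v^j_B ∂v^i_A` at `w`. -/
def Lvv {n k : ℕ} (L : Vel n k → ℝ) (w : Vel n k) (B : Fin k) (j : Fin n)
    (A : Fin k) (i : Fin n) : ℝ :=
  fderiv ℝ (fun w => Lv L w A i) w (0, Pi.single B (Pi.single j 1))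

/-- The Lagrangian 2-form `ω_L^A` at `w`:
`ω_L^A(w)((u,V),(u',V')) = Σ_i [u^i · D(∂L/∂v^i_A)(w)(u',V') − (u')^i · D(∂L/∂v^i_A)(w)(u,V)]`. -/
def omegaL {n k : ℕ} (L : Vel n k → ℝ) (A : Fin k) (w : Vel n k)
    (z z' : Vel n k) : ℝ :=
  ∑ i, (z.1 i * fderiv ℝ (fun w => Lv L w A i) w z'
        - z'.1 i * fderiv ℝ (fun w => Lv L w A i) w z)

/-- `L` is regular: the Hessian matrix `((∂²L/∂v^i_A ∂v^j_B))`, indexed by pairs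
`(i,A)` and `(j,B)`, is invertible at every point. -/
def Regular {n k : ℕ} (L : Vel n k → ℝ) : Prop :=
  ∀ w : Vel n k,
    IsUnit (Matrix.of fun (ia jb : Fin n × Fin k) => Lvv L w jb.2 jb.1 ia.2 ia.1)

/-- The Lagrangian energy `E_L(q,v) = Σ_{i,A} v^i_A (∂L/∂v^i_A)(q,v) − L(q,v)`. -/
def EL {n k : ℕ} (L : Vel n k → ℝ) (w : Vel n k) : ℝ :=
  (∑ i, ∑ A, w.2 A i * Lv L w A i) - L w

/-- `Z` is a solution of `♭_L(Z) = dE_L`, in local form. -/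
def LagEqs {n k : ℕ} (L : Vel n k → ℝ) (Z : Fin k → Vel n k → Vel n k) : Prop :=
  ∀ w : Vel n k,
    (∀ A i, (Z A w).1 i = w.2 A i) ∧
    (∀ i, ∑ A, (∑ j, Lqv L w j A i * w.2 A j
        + ∑ B, ∑ j, Lvv L w B j A i * (Z A w).2 B j) = Lq L w i)

/-- The first prolongation `σ^{(1)}(t) = (σ(t), ∂σ^i/∂t^A(t))` of `σ : ℝ^k → ℝ^n`. -/
def prolong {n k : ℕ} (σ : (Fin k → ℝ) → (Fin n → ℝ)) (t : Fin k → ℝ) : Vel n k :=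
  (σ t, fun A i => fderiv ℝ σ t (Pi.single A 1) i)

/-- `σ^{(1)}` is a solution of the Euler–Lagrange equations on `U`:
`Σ_A ∂/∂t^A [(∂L/∂v^i_A) ∘ σ^{(1)}] = (∂L/∂q^i) ∘ σ^{(1)}`. -/
def ELsol {n k : ℕ} (L : Vel n k → ℝ) (U : Set (Fin k → ℝ))
    (σ : (Fin k → ℝ) → (Fin n → ℝ)) : Prop :=
  ∀ t ∈ U, ∀ i : Fin n,
    ∑ A, fderiv ℝ (fun s => Lv L (prolong σ s) A i) t (Pi.single A 1)
      = Lq L (prolong σ t) i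

/-- An integral section of the `k`-vector field on `ℝ^n` with components `X^i_A`:
a `C²` map `σ : U → ℝ^n` on an open set `U` with `∂σ^i/∂t^A = X^i_A ∘ σ` on `U`. -/
def IsIntegralSectionX {n k : ℕ} (X : (Fin n → ℝ) → (Fin k → Fin n → ℝ))
    (U : Set (Fin k → ℝ)) (σ : (Fin k → ℝ) → (Fin n → ℝ)) : Prop :=
  IsOpen U ∧ ContDiffOn ℝ 2 σ U ∧
    ∀ t ∈ U, ∀ A, fderiv ℝ σ t (Pi.single A 1) = X (σ t) A

/-- `X` is integrable: an integral section passes through every point of `ℝ^n`. -/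
def IntegrableX {n k : ℕ} (X : (Fin n → ℝ) → (Fin k → Fin n → ℝ)) : Prop :=
  ∀ q₀ : Fin n → ℝ, ∃ (U : Set (Fin k → ℝ)) (σ : (Fin k → ℝ) → (Fin n → ℝ)),
    IsIntegralSectionX X U σ ∧ (0 : Fin k → ℝ) ∈ U ∧ σ 0 = q₀

/-- `X^*ω_L^A = 0` for all `A`: the 1-forms with components
`θ^A_i = (∂L/∂v^i_A) ∘ X̃` are closed. -/
def PullbackClosed {n k : ℕ} (L : Vel n k → ℝ)
    (X : (Fin n → ℝ) → (Fin k → Fin n → ℝ)) : Prop :=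
  ∀ (q : Fin n → ℝ) (A : Fin k) (i j : Fin n),
    fderiv ℝ (fun q => Lv L (q, X q) A i) q (Pi.single j 1) =
      fderiv ℝ (fun q => Lv L (q, X q) A j) q (Pi.single i 1)

lemma clm_expand_s9 {n k : ℕ} (φ : Vel n k →L[ℝ] ℝ) (ζ : Vel n k) :
    φ ζ = ∑ j, ζ.1 j * φ (Pi.single j 1, 0)
      + ∑ B, ∑ j, ζ.2 B j * φ (0, Pi.single B (Pi.single j 1)) := by
  have h1 : ζ = (∑ j, ζ.1 j • (((Pi.single j 1, 0) : Vel n k)))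
      + ∑ B, ∑ j, ζ.2 B j • (((0, Pi.single B (Pi.single j 1)) : Vel n k)) := by
    apply Prod.ext
    · simp [Prod.fst_sum, ← Pi.single_smul, Finset.univ_sum_single]
    · have key : ∀ B : Fin k,
          ∑ j, ζ.2 B j • (Pi.single B (Pi.single j 1) : Fin k → Fin n → ℝ)
          = Pi.single B (ζ.2 B) := by
        intro B
        funext C
        simp only [Finset.sum_apply, Pi.smul_apply, Pi.single_apply]
        split_ifs with h
        · subst h
          simp [← Pi.single_smul, Finset.univ_sum_single]
        · simp
      simp [Prod.snd_sum, key, Finset.univ_sum_single]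
  conv_lhs => rw [h1]
  rw [map_add, map_sum]
  simp only [map_sum, map_smul, smul_eq_mul]

/-- Characterization of the kernel of `♭_L` for a regular Lagrangian. -/
theorem kernel_flatL_characterization {n k : ℕ} (L : Vel n k → ℝ)
    (hL : ContDiff ℝ (⊤ : ℕ∞) L) (hreg : Regular L)
    (w : Vel n k) (z : Fin k → Vel n k) :
    (∀ ζ : Vel n k, ∑ A, omegaL L A w (z A) ζ = 0) ↔
      ((∀ A, (z A).1 = 0) ∧
       (∀ i, ∑ A, ∑ B, ∑ j, Lvv L w B j A i * (z A).2 B j = 0)) := by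
  classical
  have hexp : ∀ (A : Fin k) (i : Fin n) (ζ : Vel n k),
      fderiv ℝ (fun w => Lv L w A i) w ζ
        = ∑ j, ζ.1 j * Lqv L w j A i + ∑ B, ∑ j, ζ.2 B j * Lvv L w B j A i := by
    intro A i ζ
    simpa only [Lqv, Lvv] using clm_expand_s9 (fderiv ℝ (fun w => Lv L w A i) w) ζ
  constructor
  · intro h
    -- Step 1: the "u"-components vanish, by regularity.
    have h1 : ∀ A, (z A).1 = 0 := by
      obtain ⟨N, hMN, hNM⟩ := isUnit_iff_exists.mp (hreg w)
      set Mx : Matrix (Fin n × Fin k) (Fin n × Fin k) ℝ :=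
        Matrix.of fun (ia jb : Fin n × Fin k) => Lvv L w jb.2 jb.1 ia.2 ia.1 with hMx
      set x : Fin n × Fin k → ℝ := fun p => (z p.2).1 p.1 with hx
      have hvm : Matrix.vecMul x Mx = 0 := by
        funext jb
        obtain ⟨j, B⟩ := jb
        have hb := h (0, Pi.single B (Pi.single j 1))
        simp only [omegaL, Pi.zero_apply, zero_mul, sub_zero] at hb
        have hLvv : ∀ (A : Fin k) (i : Fin n),
            fderiv ℝ (fun w => Lv L w A i) w
              (((0 : Fin n → ℝ), Pi.single B (Pi.single j 1)) : Vel n k)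
              = Lvv L w B j A i := fun A i => rfl
        simp only [hLvv] at hb
        show ∑ ia, x ia * Mx ia (j, B) = 0
        rw [Fintype.sum_prod_type, Finset.sum_comm]
        simpa [hx, hMx] using hb
      have hx0 : x = 0 := by
        calc x = Matrix.vecMul x 1 := (Matrix.vecMul_one x).symm
        _ = Matrix.vecMul x (Mx * N) := by rw [hMN]
        _ = Matrix.vecMul (Matrix.vecMul x Mx) N := by rw [Matrix.vecMul_vecMul]
        _ = 0 := by rw [hvm, Matrix.zero_vecMul]
      intro A
      funext i
      exact congrFun hx0 (i, A)
    refine ⟨h1, fun i => ?_⟩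
    have hb := h (Pi.single i 1, 0)
    simp only [omegaL, h1, Pi.zero_apply, zero_mul, zero_sub, Pi.single_apply] at hb
    simp only [ite_mul, one_mul, zero_mul, Finset.sum_ite_eq, Finset.mem_univ,
      if_true, Finset.sum_neg_distrib] at hb
    have hb' : ∑ A, fderiv ℝ (fun w => Lv L w A i) w (z A) = 0 := by
      simpa [Finset.sum_ite_eq', neg_eq_zero] using hb
    calc ∑ A, ∑ B, ∑ j, Lvv L w B j A i * (z A).2 B j
        = ∑ A, fderiv ℝ (fun w => Lv L w A i) w (z A) := by
          refine Finset.sum_congr rfl fun A _ => ?_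
          rw [hexp, h1]
          simp [mul_comm]
    _ = 0 := hb'
  · rintro ⟨h1, h2⟩ ζ
    simp only [omegaL, h1, Pi.zero_apply, zero_mul, zero_sub, Finset.sum_neg_distrib]
    rw [Finset.sum_comm]
    have : ∀ i, ∑ A, ζ.1 i * fderiv ℝ (fun w => Lv L w A i) w (z A) = 0 := by
      intro i
      rw [← Finset.mul_sum]
      have : ∑ A, fderiv ℝ (fun w => Lv L w A i) w (z A) = 0 := by
        rw [← h2 i]
        refine Finset.sum_congr rfl fun A _ => ?_
        rw [hexp, h1]
        simp [mul_comm]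
      rw [this, mul_zero]
    simp [this]
end
end

section
/- Suppose L is regular. A k-vector field Z = (Z_A) on T, Z_A = ((Z_A^i), ((Z_A)^j_B)), satisfies Σ_A ω_L^A(w)(Z_A(w), ζ) = dE_L(w)(ζ) for every w ∈ T and ζ ∈ ℝ^n × M if and only if, at every point w = (q,v) ∈ T: Z_A^i(w) = v^i_A for all A, i, and Σ_A [ Σ_j (∂²L/∂q^j ∂v^i_A)(w) · v^j_A + Σ_{B,j} (∂²L/∂v^j_B ∂v^i_A)(w) · (Z_A)^j_B(w) ] = (∂L/∂q^i)(w) for all i. (Local characterization of solutions of ♭_L(Z) = dE_L.) -/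
open scoped BigOperators

noncomputable section

section Aux

lemma clm_decomp_s10 {n k : ℕ} (φ : Vel n k →L[ℝ] ℝ) (ζ : Vel n k) :
    φ ζ = ∑ i, ζ.1 i * φ (Pi.single i 1, 0)
      + ∑ B, ∑ j, ζ.2 B j * φ (0, Pi.single B (Pi.single j 1)) := by
  have hζ : ζ = (∑ i, ζ.1 i • ((Pi.single i 1 : Fin n → ℝ), (0 : Fin k → Fin n → ℝ)))
      + ∑ B, ∑ j, ζ.2 B j • ((0 : Fin n → ℝ),
        (Pi.single B (Pi.single j 1) : Fin k → Fin n → ℝ)) := by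
    ext x
    · simp [Prod.fst_sum, Finset.sum_apply, Pi.single_apply]
    · simp [Prod.snd_sum, Finset.sum_apply, Pi.single_apply, Finset.sum_ite_eq]
  conv_lhs => rw [hζ]
  simp only [map_add, map_sum, map_smul, smul_eq_mul]

lemma Lv_smooth {n k : ℕ} (L : Vel n k → ℝ) (hL : ContDiff ℝ (⊤ : ℕ∞) L) (A : Fin k) (i : Fin n) :
    ContDiff ℝ (⊤ : ℕ∞) fun w => Lv L w A i :=
  (hL.fderiv_right (by simp)).clm_apply contDiff_const

lemma fderiv_EL {n k : ℕ} (L : Vel n k → ℝ) (hL : ContDiff ℝ (⊤ : ℕ∞) L) (w ζ : Vel n k) :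
    fderiv ℝ (EL L) w ζ =
      ∑ i, ∑ A, w.2 A i * fderiv ℝ (fun w => Lv L w A i) w ζ - ∑ i, ζ.1 i * Lq L w i := by
  classical
  set π : Fin k → Fin n → (Vel n k →L[ℝ] ℝ) := fun A i =>
    (ContinuousLinearMap.proj (R := ℝ) (φ := fun _ : Fin n => ℝ) i).comp
      ((ContinuousLinearMap.proj (R := ℝ) (φ := fun _ : Fin k => Fin n → ℝ) A).comp
        (ContinuousLinearMap.snd ℝ (Fin n → ℝ) (Fin k → Fin n → ℝ))) with hπdef
  have hπ : ∀ (A : Fin k) (i : Fin n), HasFDerivAt (fun w : Vel n k => w.2 A i) (π A i) w :=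
    fun A i => (π A i).hasFDerivAt
  have hLvd : ∀ (A : Fin k) (i : Fin n),
      HasFDerivAt (fun w => Lv L w A i) (fderiv ℝ (fun w => Lv L w A i) w) w :=
    fun A i => ((Lv_smooth L hL A i).differentiable (by simp) w).hasFDerivAt
  have hprod : HasFDerivAt (fun w : Vel n k => ∑ i, ∑ A, w.2 A i * Lv L w A i)
      (∑ i, ∑ A, (w.2 A i • fderiv ℝ (fun w => Lv L w A i) w + Lv L w A i • π A i)) w := by
    apply HasFDerivAt.fun_sum; intro i _
    apply HasFDerivAt.fun_sum; intro A _
    exact (hπ A i).mul (hLvd A i)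
  have hE : HasFDerivAt (EL L)
      ((∑ i, ∑ A, (w.2 A i • fderiv ℝ (fun w => Lv L w A i) w + Lv L w A i • π A i))
        - fderiv ℝ L w) w :=
    hprod.sub (hL.differentiable (by simp) w).hasFDerivAt
  rw [hE.fderiv]
  have hLζ : fderiv ℝ L w ζ = ∑ i, ζ.1 i * Lq L w i + ∑ B, ∑ j, ζ.2 B j * Lv L w B j :=
    clm_decomp_s10 _ _
  simp only [ContinuousLinearMap.sub_apply, ContinuousLinearMap.sum_apply,
    ContinuousLinearMap.add_apply, ContinuousLinearMap.smul_apply, smul_eq_mul, hLζ]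
  have hπζ : ∀ (A : Fin k) (i : Fin n), π A i ζ = ζ.2 A i := fun A i => rfl
  simp only [hπζ, Finset.sum_add_distrib]
  have hcomm : ∑ i, ∑ A, Lv L w A i * ζ.2 A i = ∑ B, ∑ j, ζ.2 B j * Lv L w B j := by
    rw [Finset.sum_comm]; simp [mul_comm]
  rw [hcomm]; ring

lemma expand_sum_D {n k : ℕ} (L : Vel n k → ℝ) (Z : Fin k → Vel n k → Vel n k)
    (w : Vel n k) (h1 : ∀ A i, (Z A w).1 i = w.2 A i) (i : Fin n) :
    ∑ A, fderiv ℝ (fun w => Lv L w A i) w (Z A w)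
      = ∑ A, (∑ j, Lqv L w j A i * w.2 A j
          + ∑ B, ∑ j, Lvv L w B j A i * (Z A w).2 B j) := by
  refine Finset.sum_congr rfl fun A _ => ?_
  rw [clm_decomp_s10 (fderiv ℝ (fun w => Lv L w A i) w) (Z A w)]
  simp only [h1]
  congr 1
  · exact Finset.sum_congr rfl fun j _ => mul_comm _ _
  · exact Finset.sum_congr rfl fun B _ => Finset.sum_congr rfl fun j _ => mul_comm _ _

end Aux

/-- Local characterization of solutions of `♭_L(Z) = dE_L`. -/
theorem lagrangian_equation_local_characterization {n k : ℕ} (L : Vel n k → ℝ)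
    (hL : ContDiff ℝ (⊤ : ℕ∞) L) (hreg : Regular L)
    (Z : Fin k → Vel n k → Vel n k) (hZsm : ∀ A, ContDiff ℝ (⊤ : ℕ∞) (Z A)) :
    (∀ (w : Vel n k) (ζ : Vel n k),
        ∑ A, omegaL L A w (Z A w) ζ = fderiv ℝ (EL L) w ζ) ↔
      LagEqs L Z := by
  classical
  constructor
  · intro h w
    have key : ∀ ζ : Vel n k,
        ∑ A, ∑ i, ((Z A w).1 i * fderiv ℝ (fun w => Lv L w A i) w ζ
            - ζ.1 i * fderiv ℝ (fun w => Lv L w A i) w (Z A w))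
          = ∑ i, ∑ A, w.2 A i * fderiv ℝ (fun w => Lv L w A i) w ζ
            - ∑ i, ζ.1 i * Lq L w i := by
      intro ζ
      rw [← fderiv_EL L hL w ζ]
      simpa [omegaL] using h w ζ
    set M : Matrix (Fin n × Fin k) (Fin n × Fin k) ℝ :=
      Matrix.of fun ia jb => Lvv L w jb.2 jb.1 ia.2 ia.1 with hMdef
    set c : Fin n × Fin k → ℝ := fun ia => (Z ia.2 w).1 ia.1 - w.2 ia.2 ia.1 with hcdef
    have hvm : Matrix.vecMul c M = 0 := by
      funext jb
      obtain ⟨j, B⟩ := jb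
      have hkey := key ((0 : Fin n → ℝ), Pi.single B (Pi.single j 1))
      simp only [Pi.zero_apply, zero_mul, sub_zero, Finset.sum_const_zero] at hkey
      have hz : ∑ i, ∑ A, (Z A w).1 i *
          fderiv ℝ (fun w => Lv L w A i) w ((0 : Fin n → ℝ), Pi.single B (Pi.single j 1)) =
          ∑ i, ∑ A, w.2 A i *
          fderiv ℝ (fun w => Lv L w A i) w ((0 : Fin n → ℝ), Pi.single B (Pi.single j 1)) := by
        rw [Finset.sum_comm]; exact hkey
      simp only [Matrix.vecMul, dotProduct, Matrix.of_apply, Pi.zero_apply, hcdef,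
        hMdef]
      rw [Fintype.sum_prod_type]
      have hLvv : ∀ (A : Fin k) (i : Fin n), Lvv L w B j A i =
          fderiv ℝ (fun w => Lv L w A i) w ((0 : Fin n → ℝ), Pi.single B (Pi.single j 1)) :=
        fun A i => rfl
      simp only [hLvv, sub_mul, Finset.sum_sub_distrib]
      rw [hz]; ring
    have hM : IsUnit M := hreg w
    have hc0 : c = 0 := by
      calc c = Matrix.vecMul c 1 := (Matrix.vecMul_one c).symm
        _ = Matrix.vecMul c (M * M⁻¹) := by
            rw [Matrix.mul_nonsing_inv _ ((Matrix.isUnit_iff_isUnit_det M).mp hM)]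
        _ = Matrix.vecMul (Matrix.vecMul c M) M⁻¹ := (Matrix.vecMul_vecMul _ _ _).symm
        _ = Matrix.vecMul 0 M⁻¹ := by rw [hvm]
        _ = 0 := Matrix.zero_vecMul _
    have h1 : ∀ (A : Fin k) (i : Fin n), (Z A w).1 i = w.2 A i := by
      intro A i
      have hci := congrFun hc0 (i, A)
      simpa [hcdef, sub_eq_zero] using hci
    refine ⟨h1, ?_⟩
    intro i0
    have hkey := key ((Pi.single i0 1 : Fin n → ℝ), (0 : Fin k → Fin n → ℝ))
    have hzl : ∀ (A : Fin k) (i : Fin n), fderiv ℝ (fun w => Lv L w A i) w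
        ((Pi.single i0 1 : Fin n → ℝ), (0 : Fin k → Fin n → ℝ)) = Lqv L w i0 A i :=
      fun A i => rfl
    simp only [hzl, h1, Finset.sum_sub_distrib] at hkey
    have hb : ∑ A, ∑ i, (Pi.single i0 1 : Fin n → ℝ) i *
        fderiv ℝ (fun w => Lv L w A i) w (Z A w)
        = ∑ A, fderiv ℝ (fun w => Lv L w A i0) w (Z A w) := by
      refine Finset.sum_congr rfl fun A _ => ?_
      simp [Pi.single_apply, ite_mul]
    have hd : ∑ i, (Pi.single i0 1 : Fin n → ℝ) i * Lq L w i = Lq L w i0 := by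
      simp [Pi.single_apply, ite_mul]
    have ha : ∑ A, ∑ i, w.2 A i * Lqv L w i0 A i
        = ∑ i, ∑ A, w.2 A i * Lqv L w i0 A i := Finset.sum_comm
    rw [hb, hd, ha] at hkey
    have hA : ∑ A, fderiv ℝ (fun w => Lv L w A i0) w (Z A w) = Lq L w i0 := by
      linarith [hkey]
    rw [← hA]
    exact (expand_sum_D L Z w h1 i0).symm
  · intro h w ζ
    obtain ⟨h1, h2⟩ := h w
    have hD : ∀ i, ∑ A, fderiv ℝ (fun w => Lv L w A i) w (Z A w) = Lq L w i := by
      intro i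
      rw [← h2 i]
      exact expand_sum_D L Z w h1 i
    rw [fderiv_EL L hL w ζ]
    simp only [omegaL, h1, Finset.sum_sub_distrib]
    congr 1
    · exact Finset.sum_comm
    · rw [Finset.sum_comm]
      refine Finset.sum_congr rfl fun i _ => ?_
      rw [← Finset.mul_sum, hD i]
end
end

section
/- Suppose L is regular and Z is a solution of ♭_L(Z) = dE_L, i.e., Z_A^i(q,v) = v^i_A and Σ_A [ Σ_j ∂²L/∂q^j ∂v^i_A · v^j_A + Σ_{B,j} ∂²L/∂v^j_B ∂v^i_A · (Z_A)^j_B ] = ∂L/∂q^i on T. If σ̂ = (σ, β) : U → T is a C¹ map on an open set U ⊆ ℝ^k with ∂σ̂/∂t^A = Z_A ∘ σ̂ on U for all A (an integral section of Z), then β^i_A = ∂σ^i/∂t^A on U (so σ̂ = σ^{(1)}) and σ^{(1)} is a solution of the Euler–Lagrange equations. -/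
open scoped BigOperators

noncomputable section

lemma clm_apply_decomp {n k : ℕ} (φ : Vel n k →L[ℝ] ℝ) (z : Vel n k) :
    φ z = (∑ j, z.1 j * φ ((Pi.single j 1 : Fin n → ℝ), 0))
        + ∑ B, ∑ j, z.2 B j * φ ((0 : Fin n → ℝ), Pi.single B (Pi.single j 1)) := by
  have hz : z = (∑ j, z.1 j • (((Pi.single j 1 : Fin n → ℝ)), (0 : Fin k → Fin n → ℝ)))
      + ∑ B, ∑ j, z.2 B j • ((0 : Fin n → ℝ), (Pi.single B (Pi.single j 1) : Fin k → Fin n → ℝ)) := by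
    refine Prod.ext ?_ ?_
    · simp only [Prod.fst_add, Prod.fst_sum, Prod.smul_fst]
      funext m
      simp [Finset.sum_apply, Pi.single_apply, Finset.sum_ite_eq']
    · simp only [Prod.snd_add, Prod.snd_sum, Prod.smul_snd]
      funext B m
      simp [Finset.sum_apply, Pi.single_apply, Finset.sum_ite_eq', Finset.sum_ite_eq]
  conv_lhs => rw [hz]
  simp only [map_add, map_sum, map_smul, smul_eq_mul]

/-- An integral section `σ̂ = (σ, β)` of a solution `Z` of
`♭_L(Z) = dE_L` satisfies `β^i_A = ∂σ^i/∂t^A` (so `σ̂ = σ^{(1)}`) and solves the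
Euler–Lagrange equations. -/
theorem integral_section_satisfies_euler_lagrange {n k : ℕ} (L : Vel n k → ℝ)
    (hL : ContDiff ℝ (⊤ : ℕ∞) L) (hreg : Regular L)
    (Z : Fin k → Vel n k → Vel n k) (hZsm : ∀ A, ContDiff ℝ (⊤ : ℕ∞) (Z A))
    (hZ : LagEqs L Z)
    (U : Set (Fin k → ℝ)) (hU : IsOpen U)
    (σhat : (Fin k → ℝ) → Vel n k) (hσ : ContDiffOn ℝ 1 σhat U)
    (hint : ∀ t ∈ U, ∀ A, fderiv ℝ σhat t (Pi.single A 1) = Z A (σhat t)) :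
    (∀ t ∈ U, ∀ (A : Fin k) (i : Fin n),
        (σhat t).2 A i = fderiv ℝ (fun s => (σhat s).1 i) t (Pi.single A 1)) ∧
    (∀ t ∈ U, ∀ i : Fin n,
        ∑ A, fderiv ℝ (fun s => Lv L (σhat s) A i) t (Pi.single A 1)
          = Lq L (σhat t) i) := by
  have hdiff : ∀ t ∈ U, HasFDerivAt σhat (fderiv ℝ σhat t) t := by
    intro t ht
    exact (((hσ.differentiableOn one_ne_zero) t ht).differentiableAt
      (hU.mem_nhds ht)).hasFDerivAt
  have hLv : ∀ (A : Fin k) (i : Fin n), ContDiff ℝ (⊤ : ℕ∞) (fun w => Lv L w A i) := by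
    intro A i
    exact (hL.fderiv_right (by simp)).clm_apply contDiff_const
  constructor
  · intro t ht A i
    set D := fderiv ℝ σhat t
    have hD := hdiff t ht
    have hc : HasFDerivAt (fun s => (σhat s).1 i)
        (((ContinuousLinearMap.proj i).comp
          (ContinuousLinearMap.fst ℝ (Fin n → ℝ) (Fin k → Fin n → ℝ))).comp D) t :=
      (((ContinuousLinearMap.proj i).comp
        (ContinuousLinearMap.fst ℝ (Fin n → ℝ) (Fin k → Fin n → ℝ))).hasFDerivAt).comp t hD
    rw [hc.fderiv]
    simp only [ContinuousLinearMap.coe_comp', Function.comp_apply,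
      ContinuousLinearMap.coe_fst', ContinuousLinearMap.proj_apply]
    rw [show D (Pi.single A 1) = Z A (σhat t) from hint t ht A]
    exact ((hZ (σhat t)).1 A i).symm
  · intro t ht i
    set w := σhat t with hw
    have hD := hdiff t ht
    have key : ∀ A : Fin k,
        fderiv ℝ (fun s => Lv L (σhat s) A i) t (Pi.single A 1)
          = fderiv ℝ (fun w => Lv L w A i) w (Z A w) := by
      intro A
      have hg : HasFDerivAt (fun w => Lv L w A i)
          (fderiv ℝ (fun w => Lv L w A i) w) w :=
        (((hLv A i).differentiable (by simp)) w).hasFDerivAt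
      have hc : HasFDerivAt (fun s => Lv L (σhat s) A i)
          ((fderiv ℝ (fun w => Lv L w A i) w).comp (fderiv ℝ σhat t)) t :=
        hg.comp t hD
      rw [hc.fderiv]
      simp only [ContinuousLinearMap.coe_comp', Function.comp_apply]
      rw [hint t ht A]
    calc ∑ A, fderiv ℝ (fun s => Lv L (σhat s) A i) t (Pi.single A 1)
        = ∑ A, fderiv ℝ (fun w => Lv L w A i) w (Z A w) := by
          exact Finset.sum_congr rfl fun A _ => key A
      _ = ∑ A, ((∑ j, Lqv L w j A i * w.2 A j)
            + ∑ B, ∑ j, Lvv L w B j A i * (Z A w).2 B j) := by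
          refine Finset.sum_congr rfl fun A _ => ?_
          rw [clm_apply_decomp]
          congr 1
          · refine Finset.sum_congr rfl fun j _ => ?_
            rw [(hZ w).1 A j, mul_comm]
            rfl
          · refine Finset.sum_congr rfl fun B _ => ?_
            refine Finset.sum_congr rfl fun j _ => ?_
            rw [mul_comm]
            rfl
      _ = Lq L w i := (hZ w).2 i
end
end

section
/- (Hamilton–Jacobi Theorem, Lagrangian version.) Let X : ℝ^n → M be a smooth section satisfying X^*ω_L^A = 0 for all A, and assume the k-vector field on ℝ^n with components X^i_A is integrable. Then the following are equivalent: (i) for every integral section σ of X, the first prolongation σ^{(1)} is a solution of the Euler–Lagrange equations; (ii) d(E_L ∘ X̃) = 0, i.e., the derivative of the function E_L ∘ X̃ : ℝ^n → ℝ vanishes identically. -/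
open scoped BigOperators

noncomputable section

section HJaux

variable {n k : ℕ}

lemma pi_single_decomp (u : Fin n → ℝ) :
    u = ∑ j, u j • (Pi.single j 1 : Fin n → ℝ) := by
  funext m
  simp [Finset.sum_apply, Pi.single_apply]

lemma clm_eval_pi (f : (Fin n → ℝ) →L[ℝ] ℝ) (u : Fin n → ℝ) :
    f u = ∑ j, u j * f (Pi.single j 1) := by
  conv_lhs => rw [pi_single_decomp u]
  rw [map_sum]
  simp only [map_smul, smul_eq_mul]

lemma clm_eq_zero_of_single (f : (Fin n → ℝ) →L[ℝ] ℝ)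
    (h : ∀ j, f (Pi.single j 1) = 0) : f = 0 := by
  ext u
  rw [ContinuousLinearMap.zero_apply, clm_eval_pi]
  simp [h]

lemma prod_single_decomp (u : Fin n → ℝ) (V : Fin k → Fin n → ℝ) :
    ((u, V) : Vel n k)
      = (∑ j, u j • ((Pi.single j 1, 0) : Vel n k))
        + ∑ A, ∑ i, V A i • ((0, Pi.single A (Pi.single i 1)) : Vel n k) := by
  refine Prod.ext ?_ ?_
  · simp only [Prod.fst_add, Prod.fst_sum, Prod.smul_fst, smul_zero,
      Finset.sum_const_zero, add_zero]
    exact pi_single_decomp u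
  · simp only [Prod.snd_add, Prod.snd_sum, Prod.smul_snd, smul_zero,
      Finset.sum_const_zero, zero_add]
    funext B m
    simp [Finset.sum_apply, Pi.single_apply, ite_apply, Finset.sum_ite_eq, mul_ite]

lemma clm_eval_vel (f : Vel n k →L[ℝ] ℝ) (u : Fin n → ℝ) (V : Fin k → Fin n → ℝ) :
    f (u, V) = (∑ j, u j * f (Pi.single j 1, 0))
      + ∑ A, ∑ i, V A i * f (0, Pi.single A (Pi.single i 1)) := by
  rw [prod_single_decomp u V, map_add, map_sum, map_sum]
  simp only [map_sum, map_smul, smul_eq_mul]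

/-- The 1-form components `θ^A_i = (∂L/∂v^i_A) ∘ X̃`. -/
def theta (L : Vel n k → ℝ) (X : (Fin n → ℝ) → (Fin k → Fin n → ℝ))
    (A : Fin k) (i : Fin n) (q : Fin n → ℝ) : ℝ :=
  Lv L (q, X q) A i

end HJaux

/-- (Hamilton–Jacobi theorem, Lagrangian version.) -/
theorem lagrangian_hamilton_jacobi {n k : ℕ} (L : Vel n k → ℝ)
    (hL : ContDiff ℝ (⊤ : ℕ∞) L)
    (X : (Fin n → ℝ) → (Fin k → Fin n → ℝ)) (hXsm : ContDiff ℝ (⊤ : ℕ∞) X)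
    (hclosed : PullbackClosed L X)
    (hInt : IntegrableX X) :
    ((∀ U σ, IsIntegralSectionX X U σ → ELsol L U σ) ↔
      (∀ q : Fin n → ℝ, fderiv ℝ (fun q => EL L (q, X q)) q = 0)) := by
  classical
  -- basic smoothness facts
  have hLd : Differentiable ℝ L := hL.differentiable (by simp)
  have hXd : Differentiable ℝ X := hXsm.differentiable (by simp)
  have hLvA : ∀ (A : Fin k) (i : Fin n), ContDiff ℝ (⊤ : ℕ∞) (fun w : Vel n k => Lv L w A i) := by
    intro A i
    exact (hL.fderiv_right (by simp)).clm_apply contDiff_const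
  have hXt : ContDiff ℝ (⊤ : ℕ∞) (fun q : Fin n → ℝ => ((q, X q) : Vel n k)) :=
    contDiff_id.prodMk hXsm
  have hθ : ∀ (A : Fin k) (i : Fin n), ContDiff ℝ (⊤ : ℕ∞) (theta L X A i) := by
    intro A i
    exact ((hLvA A i).comp hXt : _)
  have hθd : ∀ (A : Fin k) (i : Fin n) (q : Fin n → ℝ),
      HasFDerivAt (theta L X A i) (fderiv ℝ (theta L X A i) q) q :=
    fun A i q => (((hθ A i).differentiable (by simp)) q).hasFDerivAt
  -- the derivative of E_L ∘ X̃ in coordinates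
  have keyE : ∀ (q : Fin n → ℝ) (j : Fin n),
      fderiv ℝ (fun q => EL L (q, X q)) q (Pi.single j 1)
        = (∑ i, ∑ A, X q A i * fderiv ℝ (theta L X A i) q (Pi.single j 1))
          - Lq L (q, X q) j := by
    intro q j
    have hXq : HasFDerivAt X (fderiv ℝ X q) q := (hXd q).hasFDerivAt
    set DX := fderiv ℝ X q
    have hT : HasFDerivAt (fun q => ((q, X q) : Vel n k))
        ((ContinuousLinearMap.id ℝ (Fin n → ℝ)).prod DX) q := (hasFDerivAt_id q).prodMk hXq
    have hLc : HasFDerivAt (fun q => L (q, X q))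
        ((fderiv ℝ L (q, X q)).comp ((ContinuousLinearMap.id ℝ (Fin n → ℝ)).prod DX)) q :=
      (hLd (q, X q)).hasFDerivAt.comp q hT
    have hXev : ∀ (A : Fin k) (i : Fin n), HasFDerivAt (fun q => X q A i)
        ((ContinuousLinearMap.proj i).comp ((ContinuousLinearMap.proj A).comp DX)) q :=
      fun A i => ((ContinuousLinearMap.proj (R := ℝ) (φ := fun _ : Fin n => ℝ)
          i).hasFDerivAt).comp q
        (((ContinuousLinearMap.proj (R := ℝ) (φ := fun _ : Fin k => Fin n → ℝ)
          A).hasFDerivAt).comp q hXq)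
    have hS : HasFDerivAt (fun q => ∑ i, ∑ A, X q A i * theta L X A i q)
        (∑ i, ∑ A, (X q A i • fderiv ℝ (theta L X A i) q
          + theta L X A i q •
            ((ContinuousLinearMap.proj i).comp ((ContinuousLinearMap.proj A).comp DX)))) q := by
      refine HasFDerivAt.fun_sum fun i _ => HasFDerivAt.fun_sum fun A _ => ?_
      exact (hXev A i).mul (hθd A i q)
    have hE : HasFDerivAt (fun q => EL L (q, X q))
        ((∑ i, ∑ A, (X q A i • fderiv ℝ (theta L X A i) q
          + theta L X A i q •
            ((ContinuousLinearMap.proj i).comp ((ContinuousLinearMap.proj A).comp DX))))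
          - (fderiv ℝ L (q, X q)).comp ((ContinuousLinearMap.id ℝ (Fin n → ℝ)).prod DX)) q :=
      hS.sub hLc
    rw [hE.fderiv]
    simp only [ContinuousLinearMap.sub_apply, ContinuousLinearMap.coe_sum',
      Finset.sum_apply, ContinuousLinearMap.add_apply, ContinuousLinearMap.smul_apply,
      ContinuousLinearMap.coe_comp', Function.comp_apply, ContinuousLinearMap.proj_apply,
      ContinuousLinearMap.prod_apply, ContinuousLinearMap.coe_id', id_eq, smul_eq_mul]
    rw [clm_eval_vel (fderiv ℝ L (q, X q)) (Pi.single j 1) (DX (Pi.single j 1))]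
    have h1 : (∑ m, (Pi.single j 1 : Fin n → ℝ) m * fderiv ℝ L (q, X q) (Pi.single m 1, 0))
        = Lq L (q, X q) j := by
      rw [Finset.sum_eq_single j]
      · simp [Lq]
      · intro b _ hb
        simp [Pi.single_apply, hb.symm]
      · simp
    rw [h1]
    have h2 : ∑ i, ∑ A, theta L X A i q * (DX (Pi.single j 1)) A i
        = ∑ A, ∑ i, (DX (Pi.single j 1)) A i
            * fderiv ℝ L (q, X q) (0, Pi.single A (Pi.single i 1)) := by
      rw [Finset.sum_comm]
      refine Finset.sum_congr rfl fun A _ => Finset.sum_congr rfl fun i _ => ?_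
      rw [mul_comm]
      rfl
    have hsplit : (∑ i, ∑ A, (X q A i * (fderiv ℝ (theta L X A i) q) (Pi.single j 1)
          + theta L X A i q * (DX (Pi.single j 1)) A i))
        = (∑ i, ∑ A, X q A i * (fderiv ℝ (theta L X A i) q) (Pi.single j 1))
          + ∑ i, ∑ A, theta L X A i q * (DX (Pi.single j 1)) A i := by
      rw [← Finset.sum_add_distrib]
      exact Finset.sum_congr rfl fun i _ => by rw [← Finset.sum_add_distrib]
    rw [hsplit, h2]
    ring
  -- derivative of E in coordinate i, rewritten using closedness
  have hEcoord : ∀ (q : Fin n → ℝ) (i : Fin n),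
      fderiv ℝ (fun q => EL L (q, X q)) q (Pi.single i 1)
        = (∑ m, ∑ A, X q A m * fderiv ℝ (theta L X A i) q (Pi.single m 1))
          - Lq L (q, X q) i := by
    intro q i
    rw [keyE q i]
    congr 1
    refine Finset.sum_congr rfl fun m _ => Finset.sum_congr rfl fun A _ => ?_
    congr 1
    exact hclosed q A m i
  -- along an integral section, prolong σ = X̃ ∘ σ
  have hprol : ∀ (U : Set (Fin k → ℝ)) (σ : (Fin k → ℝ) → (Fin n → ℝ)),
      IsIntegralSectionX X U σ → ∀ s ∈ U, prolong σ s = (σ s, X (σ s)) := by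
    rintro U σ ⟨hU, hσ2, hσX⟩ s hs
    refine Prod.ext rfl ?_
    funext A
    exact hσX s hs A
  -- key formula along integral sections
  have keyσ : ∀ (U : Set (Fin k → ℝ)) (σ : (Fin k → ℝ) → (Fin n → ℝ)),
      IsIntegralSectionX X U σ → ∀ t ∈ U, ∀ (A : Fin k) (i : Fin n),
      fderiv ℝ (fun s => Lv L (prolong σ s) A i) t (Pi.single A 1)
        = ∑ m, X (σ t) A m * fderiv ℝ (theta L X A i) (σ t) (Pi.single m 1) := by
    intro U σ hσ t ht A i
    obtain ⟨hU, hσ2, hσX⟩ := hσ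
    have hUt : U ∈ nhds t := hU.mem_nhds ht
    have hσd : DifferentiableAt ℝ σ t :=
      (hσ2.differentiableOn (by simp)).differentiableAt hUt
    have heq : (fun s => Lv L (prolong σ s) A i) =ᶠ[nhds t]
        (fun s => theta L X A i (σ s)) := by
      filter_upwards [hUt] with s hs
      rw [hprol U σ ⟨hU, hσ2, hσX⟩ s hs]
      rfl
    rw [heq.fderiv_eq]
    have hcomp : fderiv ℝ (fun s => theta L X A i (σ s)) t
        = (fderiv ℝ (theta L X A i) (σ t)).comp (fderiv ℝ σ t) :=
      fderiv_comp t (((hθ A i).differentiable (by simp)) (σ t)) hσd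
    rw [hcomp]
    rw [ContinuousLinearMap.comp_apply, hσX t ht A]
    exact clm_eval_pi _ _
  constructor
  · -- (i) ⇒ (ii)
    intro h q
    obtain ⟨U, σ, hσ, h0, hq0⟩ := hInt q
    have hel := h U σ hσ 0 h0
    apply clm_eq_zero_of_single
    intro i
    have h1 := hel i
    have h2 : ∀ A, fderiv ℝ (fun s => Lv L (prolong σ s) A i) 0 (Pi.single A 1)
        = ∑ m, X q A m * fderiv ℝ (theta L X A i) q (Pi.single m 1) := by
      intro A
      rw [keyσ U σ hσ 0 h0 A i, hq0]
    rw [Finset.sum_congr rfl (fun A _ => h2 A), hprol U σ hσ 0 h0, hq0] at h1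
    rw [hEcoord q i, sub_eq_zero, Finset.sum_comm]
    exact h1
  · -- (ii) ⇒ (i)
    intro h U σ hσ t ht i
    have h2 : ∀ A, fderiv ℝ (fun s => Lv L (prolong σ s) A i) t (Pi.single A 1)
        = ∑ m, X (σ t) A m * fderiv ℝ (theta L X A i) (σ t) (Pi.single m 1) :=
      fun A => keyσ U σ hσ t ht A i
    rw [Finset.sum_congr rfl (fun A _ => h2 A), hprol U σ hσ t ht]
    have h3 := hEcoord (σ t) i
    rw [h (σ t), ContinuousLinearMap.zero_apply] at h3
    have h4 : (∑ m, ∑ A, X (σ t) A m * fderiv ℝ (theta L X A i) (σ t) (Pi.single m 1))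
        = Lq L (σ t, X (σ t)) i := by linarith [h3.symm]
    rw [Finset.sum_comm] at h4
    exact h4
end
end

section
/- Let X : ℝ^n → M be a smooth section satisfying X^*ω_L^A = 0 for all A, and suppose d(E_L ∘ X̃) = 0, i.e., the derivative of E_L ∘ X̃ : ℝ^n → ℝ vanishes identically. Then for every integral section σ of X, the first prolongation σ^{(1)} is a solution of the Euler–Lagrange equations. -/
open scoped BigOperators

noncomputable section

lemma expand_Rn {n : ℕ} (f : (Fin n → ℝ) →L[ℝ] ℝ) (v : Fin n → ℝ) :
    f v = ∑ j, v j * f (Pi.single j 1) := by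
  have hv : v = ∑ j, v j • (Pi.single j 1 : Fin n → ℝ) := by
    funext m
    simp [Finset.sum_apply, Pi.single_apply, eq_comm]
  conv_lhs => rw [hv]
  simp [map_sum, map_smul]

lemma expand_M {n k : ℕ} (f : ((Fin k → Fin n → ℝ)) →L[ℝ] ℝ) (V : Fin k → Fin n → ℝ) :
    f V = ∑ A, ∑ j, V A j * f (Pi.single A (Pi.single j 1)) := by
  have hV : V = ∑ A, Pi.single A (V A) := by
    rw [Finset.univ_sum_single]
  conv_lhs => rw [hV, map_sum]
  refine Finset.sum_congr rfl fun A _ => ?_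
  have h2 : V A = ∑ j, V A j • (Pi.single j 1 : Fin n → ℝ) := by
    funext m; simp [Finset.sum_apply, Pi.single_apply, eq_comm]
  have h3 : (Pi.single A (V A) : Fin k → Fin n → ℝ)
      = ∑ j, V A j • (Pi.single A (Pi.single j 1) : Fin k → Fin n → ℝ) := by
    have := congrArg (LinearMap.single ℝ (fun _ => Fin n → ℝ) A) h2
    simpa [map_sum, map_smul, LinearMap.single_apply] using this
  rw [h3]
  simp [map_sum, map_smul]

lemma expand_Vel {n k : ℕ} (f : Vel n k →L[ℝ] ℝ) (u : Fin n → ℝ)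
    (V : Fin k → Fin n → ℝ) :
    f (u, V) = (∑ i, u i * f (Pi.single i 1, 0))
      + ∑ A, ∑ j, V A j * f (0, Pi.single A (Pi.single j 1)) := by
  have h : ((u, V) : Vel n k) = (u, 0) + (0, V) := by simp
  rw [h, map_add]
  congr 1
  · have := expand_Rn (f.comp (ContinuousLinearMap.inl ℝ (Fin n → ℝ) (Fin k → Fin n → ℝ))) u
    simpa using this
  · have := expand_M (f.comp (ContinuousLinearMap.inr ℝ (Fin n → ℝ) (Fin k → Fin n → ℝ))) V
    simpa using this


/-- If `d(E_L ∘ X̃) = 0` then the prolongation of every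
integral section of `X` solves the Euler–Lagrange equations. -/
theorem lagrangian_hamilton_jacobi_sufficiency {n k : ℕ} (L : Vel n k → ℝ)
    (hL : ContDiff ℝ (⊤ : ℕ∞) L)
    (X : (Fin n → ℝ) → (Fin k → Fin n → ℝ)) (hXsm : ContDiff ℝ (⊤ : ℕ∞) X)
    (hclosed : PullbackClosed L X)
    (hHJ : ∀ q : Fin n → ℝ, fderiv ℝ (fun q => EL L (q, X q)) q = 0) :
    ∀ U σ, IsIntegralSectionX X U σ → ELsol L U σ := by
  rintro U σ ⟨hU, hσC2, hint⟩ t ht i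
  have hmem : U ∈ nhds t := hU.mem_nhds ht
  have hσd : DifferentiableAt ℝ σ t :=
    (hσC2.contDiffAt hmem).differentiableAt (by norm_num)
  have hXdiff : Differentiable ℝ X := hXsm.differentiable (by simp)
  have hLvsm : ∀ A i, ContDiff ℝ (⊤ : ℕ∞) (fun w : Vel n k => Lv L w A i) := fun A i =>
    (hL.fderiv_right (by simp)).clm_apply contDiff_const
  have hθsm : ∀ A i, ContDiff ℝ (⊤ : ℕ∞) (fun q => Lv L (q, X q) A i) := fun A i =>
    (hLvsm A i).comp (contDiff_id.prodMk hXsm)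
  have hθd : ∀ (q : Fin n → ℝ) A i, DifferentiableAt ℝ (fun q => Lv L (q, X q) A i) q :=
    fun q A i => ((hθsm A i).differentiable (by simp)) q
  set q' : Fin n → ℝ := σ t with hq'def
  -- the prolongation coincides with X̃ ∘ σ on U
  have hEq : ∀ s ∈ U, prolong σ s = (σ s, X (σ s)) := by
    intro s hs
    have h1 : (fun A i => fderiv ℝ σ s (Pi.single A 1) i) = X (σ s) := by
      funext A
      exact hint s hs A
    unfold prolong
    exact congrArg (Prod.mk (σ s)) h1
  -- Left-hand side computation
  have hLHS : ∀ A : Fin k,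
      fderiv ℝ (fun s => Lv L (prolong σ s) A i) t (Pi.single A 1)
        = ∑ j, X q' A j * fderiv ℝ (fun q => Lv L (q, X q) A j) q' (Pi.single i 1) := by
    intro A
    have hev : (fun s => Lv L (prolong σ s) A i)
        =ᶠ[nhds t] ((fun q => Lv L (q, X q) A i) ∘ σ) :=
      Filter.eventually_of_mem hmem fun s hs => by
        simp only [Function.comp]
        rw [hEq s hs]
    rw [hev.fderiv_eq, fderiv_comp t (hθd (σ t) A i) hσd,
      ContinuousLinearMap.comp_apply, hint t ht A,
      expand_Rn (fderiv ℝ (fun q => Lv L (q, X q) A i) q') (X q' A)]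
    exact Finset.sum_congr rfl fun j _ => by rw [hclosed q' A i j]
  -- derivative of X components
  have hW : DifferentiableAt ℝ X q' := hXdiff q'
  set W : Fin k → Fin n → ℝ := fderiv ℝ X q' (Pi.single i 1) with hWdef
  have hXdAj : ∀ (A : Fin k) (j : Fin n), DifferentiableAt ℝ (fun q => X q A j) q' := by
    intro A j
    exact (((ContinuousLinearMap.proj (R := ℝ) (φ := fun _ : Fin n => ℝ) j).comp
      (ContinuousLinearMap.proj (R := ℝ) (φ := fun _ : Fin k => Fin n → ℝ) A)).differentiableAt).comp q' hW
  have hXcomp : ∀ (A : Fin k) (j : Fin n),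
      fderiv ℝ (fun q => X q A j) q' (Pi.single i 1) = W A j := by
    intro A j
    have e : (fun q => X q A j)
        = ((ContinuousLinearMap.proj (R := ℝ) (φ := fun _ : Fin n => ℝ) j).comp
            (ContinuousLinearMap.proj (R := ℝ) (φ := fun _ : Fin k => Fin n → ℝ) A) : _ →L[ℝ] ℝ) ∘ X := rfl
    rw [e, fderiv_comp q' (ContinuousLinearMap.differentiableAt _) hW,
      ContinuousLinearMap.fderiv]
    rfl
  -- differentiability of summands
  have hfd : ∀ (j : Fin n) (A : Fin k),
      DifferentiableAt ℝ (fun q => X q A j * Lv L (q, X q) A j) q' :=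
    fun j A => (hXdAj A j).mul (hθd q' A j)
  have hgd : DifferentiableAt ℝ (fun q => L (q, X q)) q' :=
    ((hL.differentiable (by simp)) (q', X q')).comp q' (differentiableAt_id.prodMk hW)
  have hsumd : DifferentiableAt ℝ
      (fun q => ∑ j, ∑ A, X q A j * Lv L (q, X q) A j) q' :=
    DifferentiableAt.fun_sum fun j _ => DifferentiableAt.fun_sum fun A _ => hfd j A
  -- decompose the energy derivative
  have hEexp : fderiv ℝ (fun q => EL L (q, X q)) q'
      = fderiv ℝ (fun q => ∑ j, ∑ A, X q A j * Lv L (q, X q) A j) q'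
        - fderiv ℝ (fun q => L (q, X q)) q' := by
    have h : (fun q => EL L (q, X q))
        = fun q => (∑ j, ∑ A, X q A j * Lv L (q, X q) A j) - L (q, X q) := rfl
    rw [h, fderiv_fun_sub hsumd hgd]
  have hsum_fderiv : fderiv ℝ (fun q => ∑ j, ∑ A, X q A j * Lv L (q, X q) A j) q'
        (Pi.single i 1)
      = ∑ j, ∑ A, (W A j * Lv L (q', X q') A j
          + X q' A j * fderiv ℝ (fun q => Lv L (q, X q) A j) q' (Pi.single i 1)) := by
    rw [fderiv_fun_sum (fun j _ => DifferentiableAt.fun_sum fun A _ => hfd j A),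
      ContinuousLinearMap.sum_apply]
    refine Finset.sum_congr rfl fun j _ => ?_
    rw [fderiv_fun_sum (fun A _ => hfd j A), ContinuousLinearMap.sum_apply]
    refine Finset.sum_congr rfl fun A _ => ?_
    rw [fderiv_fun_mul (hXdAj A j) (hθd q' A j)]
    simp only [ContinuousLinearMap.add_apply, ContinuousLinearMap.smul_apply,
      smul_eq_mul, hXcomp A j]
    ring
  have hgW : fderiv ℝ (fun q => L (q, X q)) q' (Pi.single i 1)
      = Lq L (q', X q') i + ∑ A, ∑ j, W A j * Lv L (q', X q') A j := by
    have hprod : HasFDerivAt (fun q : Fin n → ℝ => ((q, X q) : Vel n k))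
        ((ContinuousLinearMap.id ℝ (Fin n → ℝ)).prod (fderiv ℝ X q')) q' :=
      HasFDerivAt.prodMk (hasFDerivAt_id q') hW.hasFDerivAt
    have hLw : HasFDerivAt L (fderiv ℝ L (q', X q')) (q', X q') :=
      ((hL.differentiable (by simp)) (q', X q')).hasFDerivAt
    have hc : fderiv ℝ (fun q => L (q, X q)) q'
        = (fderiv ℝ L (q', X q')).comp
            ((ContinuousLinearMap.id ℝ (Fin n → ℝ)).prod (fderiv ℝ X q')) :=
      (hLw.comp q' hprod).fderiv
    rw [hc, ContinuousLinearMap.comp_apply]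
    have happ : ((ContinuousLinearMap.id ℝ (Fin n → ℝ)).prod (fderiv ℝ X q'))
        (Pi.single i 1) = ((Pi.single i 1 : Fin n → ℝ), W) := rfl
    rw [happ, expand_Vel (fderiv ℝ L (q', X q')) _ _]
    congr 1
    · have : ∀ i' : Fin n, (Pi.single i 1 : Fin n → ℝ) i'
          * fderiv ℝ L (q', X q') ((Pi.single i' 1 : Fin n → ℝ), 0)
          = if i' = i then Lq L (q', X q') i' else 0 := by
        intro i'
        by_cases h : i' = i <;> simp [h, Pi.single_apply, Lq]
      rw [Finset.sum_congr rfl fun i' _ => this i']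
      simp [Lq]
  -- the Hamilton–Jacobi equation applied at q'
  have hE0 : fderiv ℝ (fun q => ∑ j, ∑ A, X q A j * Lv L (q, X q) A j) q' (Pi.single i 1)
      - fderiv ℝ (fun q => L (q, X q)) q' (Pi.single i 1) = 0 := by
    rw [← ContinuousLinearMap.sub_apply, ← hEexp, hHJ q']
    rfl
  rw [hsum_fderiv, hgW] at hE0
  -- assemble
  rw [Finset.sum_congr rfl fun A _ => hLHS A, hEq t ht]
  have hsplit : ∑ j, ∑ A, (W A j * Lv L (q', X q') A j
      + X q' A j * fderiv ℝ (fun q => Lv L (q, X q) A j) q' (Pi.single i 1))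
    = (∑ j, ∑ A, W A j * Lv L (q', X q') A j)
      + ∑ j, ∑ A, X q' A j * fderiv ℝ (fun q => Lv L (q, X q) A j) q' (Pi.single i 1) := by
    simp [Finset.sum_add_distrib]
  have hswap : ∑ j, ∑ A, W A j * Lv L (q', X q') A j
      = ∑ A, ∑ j, W A j * Lv L (q', X q') A j := Finset.sum_comm
  have hswap2 : ∑ A, ∑ j, X q' A j * fderiv ℝ (fun q => Lv L (q, X q) A j) q' (Pi.single i 1)
      = ∑ j, ∑ A, X q' A j * fderiv ℝ (fun q => Lv L (q, X q) A j) q' (Pi.single i 1) :=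
    Finset.sum_comm
  rw [hsplit, hswap] at hE0
  rw [hswap2]
  linarith
end
end

section
/- Suppose L is regular. Let Z be a solution of ♭_L(Z) = dE_L, i.e., Z_A^i(q,v) = v^i_A and Σ_A [ Σ_j ∂²L/∂q^j ∂v^i_A · v^j_A + Σ_{B,j} ∂²L/∂v^j_B ∂v^i_A · (Z_A)^j_B ] = ∂L/∂q^i on T, and let X : ℝ^n → M be a smooth section satisfying X^*ω_L^A = 0 for all A. Then the following are equivalent: (i) for every q ∈ ℝ^n, the k-tuple of tangent vectors (Z_A(X̃(q)) − DX̃(q)(X_A(q)))_{A ∈ Fin k} lies in the kernel of ♭_L at X̃(q), i.e., Σ_A ω_L^A(X̃(q))(Z_A(X̃(q)) − DX̃(q)(X_A(q)), ζ) = 0 for every ζ ∈ ℝ^n × M, where DX̃(q) : ℝ^n → ℝ^n × M is the Fréchet derivative of X̃ at q and X_A(q) ∈ ℝ^n is the vector with components X^i_A(q); (ii) d(E_L ∘ X̃) = 0, i.e., the derivative of E_L ∘ X̃ : ℝ^n → ℝ vanishes identically. -/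
open scoped BigOperators

noncomputable section

theorem HJ.pi_decomp {n : ℕ} (u : Fin n → ℝ) :
    u = ∑ i, u i • (Pi.single i 1 : Fin n → ℝ) := by
  simp_rw [← Pi.single_smul, smul_eq_mul, mul_one, Finset.univ_sum_single]

theorem HJ.clm_pi_decomp {n : ℕ} (φ : (Fin n → ℝ) →L[ℝ] ℝ) (u : Fin n → ℝ) :
    φ u = ∑ i, u i * φ (Pi.single i 1) := by
  conv_lhs => rw [HJ.pi_decomp u]
  simp

theorem HJ.vel_decomp {n k : ℕ} (z : Vel n k) :
    z = (∑ i, z.1 i • (((Pi.single i 1 : Fin n → ℝ), 0) : Vel n k))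
      + ∑ A, ∑ i, z.2 A i • (((0, Pi.single A (Pi.single i 1)) : Vel n k)) := by
  ext
  · rename_i j
    simp only [Prod.fst_add, Prod.fst_sum, Prod.smul_mk, Pi.add_apply, Finset.sum_apply,
      Pi.smul_apply, smul_eq_mul, smul_zero, mul_zero, Finset.sum_const_zero, add_zero]
    rw [Finset.sum_eq_single j] <;> simp +contextual [Pi.single_apply]
  · rename_i A i
    simp only [Prod.snd_add, Prod.snd_sum, Prod.smul_mk, Finset.sum_apply, Pi.add_apply,
      Pi.smul_apply, smul_eq_mul, mul_zero, Finset.sum_const_zero, zero_add, smul_zero]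
    rw [Finset.sum_eq_single A]
    · rw [Finset.sum_eq_single i] <;> simp +contextual [Pi.single_apply]
    · intro B _ hB; simp [Pi.single_apply, hB.symm]
    · simp

theorem HJ.clm_vel_decomp {n k : ℕ} (φ : Vel n k →L[ℝ] ℝ) (z : Vel n k) :
    φ z = ∑ i, z.1 i * φ (Pi.single i 1, 0)
      + ∑ A, ∑ i, z.2 A i * φ (0, Pi.single A (Pi.single i 1)) := by
  conv_lhs => rw [HJ.vel_decomp z]
  simp only [map_add, map_sum, map_smul, smul_eq_mul]

theorem HJ.fderiv_section {n k : ℕ} (f : Vel n k → ℝ) (hf : ContDiff ℝ (⊤ : ℕ∞) f)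
    (X : (Fin n → ℝ) → (Fin k → Fin n → ℝ)) (hX : ContDiff ℝ (⊤ : ℕ∞) X) (q : Fin n → ℝ)
    (u : Fin n → ℝ) :
    fderiv ℝ (fun q => f (q, X q)) q u = fderiv ℝ f (q, X q) (u, fderiv ℝ X q u) := by
  have hι : HasFDerivAt (fun q => ((q, X q) : Vel n k))
      ((ContinuousLinearMap.id ℝ (Fin n → ℝ)).prod (fderiv ℝ X q)) q :=
    (hasFDerivAt_id q).prodMk (hX.differentiable (by simp) q).hasFDerivAt
  have h := ((hf.differentiable (by simp) (q, X q)).hasFDerivAt.comp q hι).fderiv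
  have h2 : (fun q => f (q, X q)) = f ∘ fun q => (q, X q) := rfl
  rw [h2, h]; rfl

theorem HJ.fderiv_sec_eq {n k : ℕ} (X : (Fin n → ℝ) → (Fin k → Fin n → ℝ))
    (hX : ContDiff ℝ (⊤ : ℕ∞) X) (q u : Fin n → ℝ) :
    fderiv ℝ (fun q => ((q, X q) : Vel n k)) q u = (u, fderiv ℝ X q u) := by
  have hι : HasFDerivAt (fun q => ((q, X q) : Vel n k))
      ((ContinuousLinearMap.id ℝ (Fin n → ℝ)).prod (fderiv ℝ X q)) q :=
    (hasFDerivAt_id q).prodMk (hX.differentiable (by simp) q).hasFDerivAt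
  rw [hι.fderiv]; rfl

theorem HJ.contDiff_Lv {n k : ℕ} (L : Vel n k → ℝ) (hL : ContDiff ℝ (⊤ : ℕ∞) L)
    (A : Fin k) (i : Fin n) : ContDiff ℝ (⊤ : ℕ∞) (fun w => Lv L w A i) :=
  (hL.fderiv_right (by simp)).clm_apply contDiff_const

theorem HJ.key_algebra {n k : ℕ} (x P : Fin n → Fin k → ℝ) (Q : Fin k → Fin k → Fin n → ℝ)
    (D : Fin n → Fin k → Fin n → ℝ) (D' Lv' : Fin k → Fin n → ℝ)
    (Z2 : Fin k → Fin k → Fin n → ℝ) :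
    (∑ i, ∑ A, (x i A * (P i A + ∑ B, ∑ l, D i B l * Q A B l) + Lv' A i * D' A i))
      - ((∑ A, (∑ i, P i A * x i A + ∑ B, ∑ l, Q A B l * Z2 A B l))
          + ∑ A, ∑ i, D' A i * Lv' A i)
    = - ∑ A, ∑ B, ∑ l, (Z2 A B l - ∑ i, x i A * D i B l) * Q A B l := by
  have e1 : ∑ i, ∑ A, x i A * P i A = ∑ A, ∑ i, P i A * x i A := by
    rw [Finset.sum_comm]
    exact Finset.sum_congr rfl fun A _ => Finset.sum_congr rfl fun i _ => mul_comm _ _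
  have e2 : ∑ i, ∑ A, x i A * ∑ B, ∑ l, D i B l * Q A B l
      = ∑ A, ∑ B, ∑ l, (∑ i, x i A * D i B l) * Q A B l := by
    rw [Finset.sum_comm]
    refine Finset.sum_congr rfl fun A _ => ?_
    simp_rw [Finset.mul_sum, Finset.sum_mul]
    rw [Finset.sum_comm]
    refine Finset.sum_congr rfl fun B _ => ?_
    rw [Finset.sum_comm]
    exact Finset.sum_congr rfl fun l _ => Finset.sum_congr rfl fun i _ => (mul_assoc _ _ _).symm
  have e3 : ∑ i, ∑ A, Lv' A i * D' A i = ∑ A, ∑ i, D' A i * Lv' A i := by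
    rw [Finset.sum_comm]
    exact Finset.sum_congr rfl fun A _ => Finset.sum_congr rfl fun i _ => mul_comm _ _
  have e4 : ∀ A B, ∑ l, Q A B l * Z2 A B l = ∑ l, Z2 A B l * Q A B l :=
    fun A B => Finset.sum_congr rfl fun l _ => mul_comm _ _
  simp only [mul_add, Finset.sum_add_distrib, sub_mul, Finset.sum_sub_distrib, e4]
  rw [e1, e2, e3]
  ring
/-- `Z ∘ X̃ − TX̃(X) ∈ ker ♭_L` iff `d(E_L ∘ X̃) = 0`. -/
theorem lagrangian_hamilton_jacobi_kernel_iff {n k : ℕ} (L : Vel n k → ℝ)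
    (hL : ContDiff ℝ (⊤ : ℕ∞) L) (hreg : Regular L)
    (Z : Fin k → Vel n k → Vel n k) (hZsm : ∀ A, ContDiff ℝ (⊤ : ℕ∞) (Z A))
    (hZ : LagEqs L Z)
    (X : (Fin n → ℝ) → (Fin k → Fin n → ℝ)) (hXsm : ContDiff ℝ (⊤ : ℕ∞) X)
    (hclosed : PullbackClosed L X) :
    ((∀ (q : Fin n → ℝ) (ζ : Vel n k),
        ∑ A, omegaL L A (q, X q)
          (Z A (q, X q) - fderiv ℝ (fun q => ((q, X q) : Vel n k)) q (X q A)) ζ = 0) ↔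
      (∀ q : Fin n → ℝ, fderiv ℝ (fun q => EL L (q, X q)) q = 0)) := by  classical
  have hιsm : ContDiff ℝ (⊤ : ℕ∞) (fun q => ((q, X q) : Vel n k)) := contDiff_id.prodMk hXsm
  have hθsm : ∀ (A : Fin k) (i : Fin n), ContDiff ℝ (⊤ : ℕ∞) (fun q => Lv L (q, X q) A i) :=
    fun A i => (HJ.contDiff_Lv L hL A i).comp hιsm
  have hDXsec : ∀ (q u : Fin n → ℝ),
      fderiv ℝ (fun q => ((q, X q) : Vel n k)) q u = (u, fderiv ℝ X q u) :=
    HJ.fderiv_sec_eq X hXsm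
  set c : (Fin n → ℝ) → Fin n → ℝ := fun q i =>
    ∑ A, fderiv ℝ (fun w => Lv L w A i) (q, X q)
      (Z A (q, X q) - fderiv ℝ (fun q => ((q, X q) : Vel n k)) q (X q A)) with hc_def
  have hD1 : ∀ (q : Fin n → ℝ) (A : Fin k),
      (Z A (q, X q) - fderiv ℝ (fun q => ((q, X q) : Vel n k)) q (X q A)).1 = 0 := by
    intro q A
    funext i
    have h1 := (hZ (q, X q)).1 A i
    simp [hDXsec, h1]
  have hsum_omega : ∀ (q : Fin n → ℝ) (ζ : Vel n k),
      (∑ A, omegaL L A (q, X q)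
        (Z A (q, X q) - fderiv ℝ (fun q => ((q, X q) : Vel n k)) q (X q A)) ζ)
      = - ∑ i, ζ.1 i * c q i := by
    intro q ζ
    simp only [omegaL]
    rw [Finset.sum_comm]
    rw [← Finset.sum_neg_distrib]
    refine Finset.sum_congr rfl fun i _ => ?_
    have : ∀ A : Fin k,
        (Z A (q, X q) - fderiv ℝ (fun q => ((q, X q) : Vel n k)) q (X q A)).1 i = 0 := by
      intro A; rw [hD1 q A]; rfl
    simp only [this, zero_mul, zero_sub, Finset.sum_neg_distrib, hc_def, Finset.mul_sum]
  have hD2 : ∀ (q : Fin n → ℝ) (A : Fin k) (B : Fin k) (l : Fin n),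
      (Z A (q, X q) - fderiv ℝ (fun q => ((q, X q) : Vel n k)) q (X q A)).2 B l
        = (Z A (q, X q)).2 B l - ∑ i, X q A i * fderiv ℝ X q (Pi.single i 1) B l := by
    intro q A B l
    have hlin : fderiv ℝ X q (X q A) B l
        = ∑ i, X q A i * fderiv ℝ X q (Pi.single i 1) B l := by
      conv_lhs => rw [HJ.pi_decomp (X q A)]
      simp [Finset.sum_apply]
    rw [hDXsec]
    simp [hlin]
  have hc_expand : ∀ (q : Fin n → ℝ) (j : Fin n),
      c q j = ∑ A, ∑ B, ∑ l,
        ((Z A (q, X q)).2 B l - ∑ i, X q A i * fderiv ℝ X q (Pi.single i 1) B l)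
          * Lvv L (q, X q) B l A j := by
    intro q j
    rw [hc_def]
    refine Finset.sum_congr rfl fun A _ => ?_
    rw [HJ.clm_vel_decomp]
    have h1 : ∀ i : Fin n,
        (Z A (q, X q) - fderiv ℝ (fun q => ((q, X q) : Vel n k)) q (X q A)).1 i = 0 := by
      intro i; rw [hD1 q A]; rfl
    simp only [h1, zero_mul, Finset.sum_const_zero, zero_add]
    refine Finset.sum_congr rfl fun B _ => Finset.sum_congr rfl fun l _ => ?_
    rw [hD2 q A B l]
    rfl
  have key : ∀ (q : Fin n → ℝ) (j : Fin n),
      fderiv ℝ (fun q => EL L (q, X q)) q (Pi.single j 1) = - c q j := by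
    intro q j
    have hXAi : ∀ (A : Fin k) (i : Fin n), HasFDerivAt (fun q => X q A i)
        (((ContinuousLinearMap.proj i).comp (ContinuousLinearMap.proj A)).comp
          (fderiv ℝ X q)) q :=
      fun A i => (((ContinuousLinearMap.proj i).comp
        (ContinuousLinearMap.proj (R := ℝ) (φ := fun _ : Fin k => Fin n → ℝ) A)).hasFDerivAt).comp
          q (hXsm.differentiable (by simp) q).hasFDerivAt
    have hθfd : ∀ (A : Fin k) (i : Fin n), HasFDerivAt (fun q => Lv L (q, X q) A i)
        (fderiv ℝ (fun q => Lv L (q, X q) A i) q) q :=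
      fun A i => ((hθsm A i).differentiable (by simp) q).hasFDerivAt
    have hLι : HasFDerivAt (fun q => L (q, X q)) (fderiv ℝ (fun q => L (q, X q)) q) q :=
      (((hL.comp hιsm)).differentiable (by simp) q).hasFDerivAt
    have hE : HasFDerivAt (fun q => EL L (q, X q))
        ((∑ i, ∑ A, (X q A i • fderiv ℝ (fun q => Lv L (q, X q) A i) q
          + Lv L (q, X q) A i •
            (((ContinuousLinearMap.proj i).comp (ContinuousLinearMap.proj A)).comp
              (fderiv ℝ X q))))
          - fderiv ℝ (fun q => L (q, X q)) q) q := by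
      have h0 : (fun q => EL L (q, X q))
          = fun q => (∑ i, ∑ A, X q A i * Lv L (q, X q) A i) - L (q, X q) := rfl
      rw [h0]
      exact (HasFDerivAt.fun_sum fun i _ => HasFDerivAt.fun_sum fun A _ =>
        (hXAi A i).fun_mul (hθfd A i)).fun_sub hLι
    rw [hE.fderiv]
    have hDL : fderiv ℝ (fun q => L (q, X q)) q (Pi.single j 1)
        = Lq L (q, X q) j
          + ∑ A, ∑ i, fderiv ℝ X q (Pi.single j 1) A i * Lv L (q, X q) A i := by
      rw [HJ.fderiv_section L hL X hXsm, HJ.clm_vel_decomp]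
      congr 1
      rw [Finset.sum_eq_single j] <;> simp +contextual [Pi.single_apply, Lq]
    have hθval : ∀ (A : Fin k) (i : Fin n),
        fderiv ℝ (fun q => Lv L (q, X q) A i) q (Pi.single j 1)
          = Lqv L (q, X q) i A j
            + ∑ B, ∑ l, fderiv ℝ X q (Pi.single i 1) B l * Lvv L (q, X q) B l A j := by
      intro A i
      rw [hclosed q A i j, HJ.fderiv_section _ (HJ.contDiff_Lv L hL A j) X hXsm,
        HJ.clm_vel_decomp]
      congr 1
      rw [Finset.sum_eq_single i] <;> simp +contextual [Pi.single_apply, Lqv]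
    have hZj := (hZ (q, X q)).2 j
    simp only [ContinuousLinearMap.sub_apply, ContinuousLinearMap.coe_sum',
      Finset.sum_apply, ContinuousLinearMap.add_apply, ContinuousLinearMap.smul_apply,
      smul_eq_mul, ContinuousLinearMap.coe_comp', Function.comp_apply,
      ContinuousLinearMap.proj_apply]
    rw [hDL, hc_expand q j, ← hZj]
    simp only [hθval]
    exact HJ.key_algebra (fun i A => X q A i) (fun i A => Lqv L (q, X q) i A j)
      (fun A B l => Lvv L (q, X q) B l A j) (fun i B l => fderiv ℝ X q (Pi.single i 1) B l)
      (fun A i => fderiv ℝ X q (Pi.single j 1) A i) (fun A i => Lv L (q, X q) A i)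
      (fun A B l => (Z A (q, X q)).2 B l)
  constructor
  · intro h q
    have hc0 : ∀ i, c q i = 0 := by
      intro i
      have h2 := h q ((Pi.single i 1, 0) : Vel n k)
      rw [hsum_omega] at h2
      have : (∑ m, (Pi.single i 1 : Fin n → ℝ) m * c q m) = c q i := by
        rw [Finset.sum_eq_single i] <;> simp +contextual [Pi.single_apply]
      rw [this] at h2
      linarith
    ext u
    have hEq : fderiv ℝ (fun q => EL L (q, X q)) q u
        = ∑ i, u i * fderiv ℝ (fun q => EL L (q, X q)) q (Pi.single i 1) :=
      HJ.clm_pi_decomp _ u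
    simp [hEq, key, hc0]
  · intro h q ζ
    rw [hsum_omega]
    have hc0 : ∀ i, c q i = 0 := by
      intro i
      have := key q i
      rw [h q] at this
      simpa using this.symm
    simp [hc0]
end
end

section
/- Suppose L is regular. Let Z be a solution of ♭_L(Z) = dE_L, i.e., Z_A^i(q,v) = v^i_A and Σ_A [ Σ_j ∂²L/∂q^j ∂v^i_A · v^j_A + Σ_{B,j} ∂²L/∂v^j_B ∂v^i_A · (Z_A)^j_B ] = ∂L/∂q^i on T, and let X : ℝ^n → M be a smooth section satisfying X^*ω_L^A = 0 for all A such that the k-vector field on ℝ^n with components X^i_A is integrable. Then the following are equivalent: (i) for every q ∈ ℝ^n and every ζ ∈ ℝ^n × M, Σ_A ω_L^A(X̃(q))(Z_A(X̃(q)) − DX̃(q)(X_A(q)), ζ) = 0, where DX̃(q) : ℝ^n → ℝ^n × M is the Fréchet derivative of X̃ at q and X_A(q) ∈ ℝ^n has components X^i_A(q); (ii) d(E_L ∘ X̃) = 0, i.e., the derivative of E_L ∘ X̃ : ℝ^n → ℝ vanishes identically; (iii) for every integral section σ of X, the first prolongation σ^{(1)} is a solution of the Euler–Lagrange equations. -/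
open scoped BigOperators

noncomputable section

namespace HJ

variable {n k : ℕ}

lemma clm_expand1 (φ : (Fin n → ℝ) →L[ℝ] ℝ) (u : Fin n → ℝ) :
    φ u = ∑ j, u j * φ (Pi.single j 1) := by
  have h : u = ∑ j, u j • (Pi.single j 1 : Fin n → ℝ) := by
    funext m; simp [Finset.sum_apply, Pi.single_apply, mul_ite]
  calc φ u = φ (∑ j, u j • (Pi.single j 1 : Fin n → ℝ)) := by rw [← h]
    _ = ∑ j, u j * φ (Pi.single j 1) := by rw [map_sum]; simp [smul_eq_mul]

lemma clm_expand1' (φ : (Fin n → ℝ) →L[ℝ] (Fin k → Fin n → ℝ)) (u : Fin n → ℝ)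
    (B : Fin k) (m : Fin n) :
    φ u B m = ∑ j, u j * φ (Pi.single j 1) B m := by
  have h : u = ∑ j, u j • (Pi.single j 1 : Fin n → ℝ) := by
    funext m; simp [Finset.sum_apply, Pi.single_apply, mul_ite]
  calc φ u B m = φ (∑ j, u j • (Pi.single j 1 : Fin n → ℝ)) B m := by rw [← h]
    _ = ∑ j, u j * φ (Pi.single j 1) B m := by
        rw [map_sum]; simp [Finset.sum_apply, smul_eq_mul]

lemma clm_eq_zero (φ : (Fin n → ℝ) →L[ℝ] ℝ)
    (h : ∀ j, φ (Pi.single j 1) = 0) : φ = 0 := by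
  ext u
  rw [show φ u = φ u from rfl, clm_expand1 φ u]
  simp [h]

lemma clm_expand (φ : Vel n k →L[ℝ] ℝ) (u : Fin n → ℝ) (V : Fin k → Fin n → ℝ) :
    φ (u, V) = ∑ j, u j * φ (Pi.single j 1, 0)
      + ∑ B, ∑ m, V B m * φ (0, Pi.single B (Pi.single m 1)) := by
  have h : ((u, V) : Vel n k)
      = (∑ j, u j • ((Pi.single j 1 : Fin n → ℝ), (0 : Fin k → Fin n → ℝ)))
        + ∑ B, ∑ m, V B m • ((0 : Fin n → ℝ), (Pi.single B (Pi.single m 1) : Fin k → Fin n → ℝ)) := by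
    refine Prod.ext ?_ ?_
    · funext m
      simp [Prod.fst_sum, Finset.sum_apply, Pi.single_apply, mul_ite]
    · funext C p
      simp [Prod.snd_sum, Finset.sum_apply, Pi.single_apply,
        apply_ite (fun f : Fin n → ℝ => f p), mul_ite]
  rw [h, map_add, map_sum]
  congr 1
  · refine Finset.sum_congr rfl fun j _ => ?_
    rw [map_smul, smul_eq_mul]
  · rw [map_sum]
    refine Finset.sum_congr rfl fun B _ => ?_
    rw [map_sum]
    refine Finset.sum_congr rfl fun m _ => ?_
    rw [map_smul, smul_eq_mul]

lemma Lv_smooth {L : Vel n k → ℝ} (hL : ContDiff ℝ (⊤ : ℕ∞) L) (A : Fin k) (i : Fin n) :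
    ContDiff ℝ (⊤ : ℕ∞) (fun w => Lv L w A i) :=
  (hL.fderiv_right (by simp)).clm_apply contDiff_const

lemma Xt_smooth {X : (Fin n → ℝ) → (Fin k → Fin n → ℝ)} (hX : ContDiff ℝ (⊤ : ℕ∞) X) :
    ContDiff ℝ (⊤ : ℕ∞) (fun q => ((q, X q) : Vel n k)) :=
  contDiff_id.prodMk hX

lemma fderiv_Xt {X : (Fin n → ℝ) → (Fin k → Fin n → ℝ)} (hX : ContDiff ℝ (⊤ : ℕ∞) X)
    (q : Fin n → ℝ) (u : Fin n → ℝ) :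
    fderiv ℝ (fun q => ((q, X q) : Vel n k)) q u = (u, fderiv ℝ X q u) := by
  rw [DifferentiableAt.fderiv_prodMk differentiableAt_fun_id (hX.differentiable (by simp) q)]
  simp

lemma chain_apply {X : (Fin n → ℝ) → (Fin k → Fin n → ℝ)} (hX : ContDiff ℝ (⊤ : ℕ∞) X)
    {g : Vel n k → ℝ} (hg : ContDiff ℝ (⊤ : ℕ∞) g) (q : Fin n → ℝ) (u : Fin n → ℝ) :
    fderiv ℝ (fun q => g (q, X q)) q u = fderiv ℝ g (q, X q) (u, fderiv ℝ X q u) := by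
  have hcomp : (fun q => g (q, X q)) = g ∘ (fun q => ((q, X q) : Vel n k)) := rfl
  rw [hcomp, fderiv_comp q (hg.differentiable (by simp) _)
      ((Xt_smooth hX).differentiable (by simp) q)]
  simp [fderiv_Xt hX]

lemma fderiv_X_comp {X : (Fin n → ℝ) → (Fin k → Fin n → ℝ)} (hX : ContDiff ℝ (⊤ : ℕ∞) X)
    (A : Fin k) (i : Fin n) (q u : Fin n → ℝ) :
    fderiv ℝ (fun q => X q A i) q u = fderiv ℝ X q u A i := by
  have e : (fun q => X q A i)
      = ((ContinuousLinearMap.proj i).comp (ContinuousLinearMap.proj A :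
          (Fin k → Fin n → ℝ) →L[ℝ] (Fin n → ℝ))) ∘ X := rfl
  rw [e, fderiv_comp q (ContinuousLinearMap.differentiableAt _) (hX.differentiable (by simp) q),
    ContinuousLinearMap.fderiv]
  rfl

lemma X_comp_diff {X : (Fin n → ℝ) → (Fin k → Fin n → ℝ)} (hX : ContDiff ℝ (⊤ : ℕ∞) X)
    (A : Fin k) (i : Fin n) : ContDiff ℝ (⊤ : ℕ∞) (fun q => X q A i) := by
  exact ((ContinuousLinearMap.proj i : (Fin n → ℝ) →L[ℝ] ℝ).contDiff.comp
    ((ContinuousLinearMap.proj A : (Fin k → Fin n → ℝ) →L[ℝ] (Fin n → ℝ)).contDiff.comp hX))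

/-- Chain rule in coordinates for `q ↦ ∂L/∂v^i_A (q, X q)`. -/
lemma Ctheta {L : Vel n k → ℝ} (hL : ContDiff ℝ (⊤ : ℕ∞) L)
    {X : (Fin n → ℝ) → (Fin k → Fin n → ℝ)} (hX : ContDiff ℝ (⊤ : ℕ∞) X)
    (A : Fin k) (i : Fin n) (q : Fin n → ℝ) (j : Fin n) :
    fderiv ℝ (fun q => Lv L (q, X q) A i) q (Pi.single j 1)
      = Lqv L (q, X q) j A i
        + ∑ B, ∑ m, fderiv ℝ X q (Pi.single j 1) B m * Lvv L (q, X q) B m A i := by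
  rw [chain_apply hX (Lv_smooth hL A i), clm_expand]
  congr 1
  · simp [Lqv, Pi.single_apply, ite_mul]

/-- Directional derivative of the pulled-back energy (★). -/
lemma EL_deriv {L : Vel n k → ℝ} (hL : ContDiff ℝ (⊤ : ℕ∞) L)
    {X : (Fin n → ℝ) → (Fin k → Fin n → ℝ)} (hX : ContDiff ℝ (⊤ : ℕ∞) X)
    (q : Fin n → ℝ) (j : Fin n) :
    fderiv ℝ (fun q => EL L (q, X q)) q (Pi.single j 1)
      = (∑ i, ∑ A, X q A i * fderiv ℝ (fun q => Lv L (q, X q) A i) q (Pi.single j 1))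
        - Lq L (q, X q) j := by
  have hdm : ∀ (i : Fin n) (A : Fin k),
      DifferentiableAt ℝ (fun q => X q A i * Lv L (q, X q) A i) q := fun i A =>
    ((X_comp_diff hX A i).differentiable (by simp) q).mul
      (((Lv_smooth hL A i).comp (Xt_smooth hX)).differentiable (by simp) q)
  have hd1 : ∀ i : Fin n,
      DifferentiableAt ℝ (fun q => ∑ A, X q A i * Lv L (q, X q) A i) q :=
    fun i => DifferentiableAt.fun_sum fun A _ => hdm i A
  have hsum : DifferentiableAt ℝ (fun q => ∑ i, ∑ A, X q A i * Lv L (q, X q) A i) q :=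
    DifferentiableAt.fun_sum fun i _ => hd1 i
  have hLc : DifferentiableAt ℝ (fun q => L (q, X q)) q :=
    (hL.comp (Xt_smooth hX)).differentiable (by simp) q
  have hEL : (fun q => EL L (q, X q))
      = fun q => (∑ i, ∑ A, X q A i * Lv L (q, X q) A i) - L (q, X q) := rfl
  have step1 : fderiv ℝ (fun q => EL L (q, X q)) q (Pi.single j 1)
      = (∑ i, ∑ A, (X q A i * fderiv ℝ (fun q => Lv L (q, X q) A i) q (Pi.single j 1)
            + Lv L (q, X q) A i * fderiv ℝ X q (Pi.single j 1) A i))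
        - (Lq L (q, X q) j
            + ∑ B, ∑ m, fderiv ℝ X q (Pi.single j 1) B m * Lv L (q, X q) B m) := by
    rw [hEL, fderiv_fun_sub hsum hLc, ContinuousLinearMap.sub_apply]
    congr 1
    · rw [fderiv_fun_sum fun i _ => hd1 i, ContinuousLinearMap.sum_apply]
      refine Finset.sum_congr rfl fun i _ => ?_
      rw [fderiv_fun_sum fun A _ => hdm i A, ContinuousLinearMap.sum_apply]
      refine Finset.sum_congr rfl fun A _ => ?_
      have hc : DifferentiableAt ℝ (fun q => X q A i) q :=
        (X_comp_diff hX A i).differentiable (by simp) q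
      have hd : DifferentiableAt ℝ (fun q => Lv L (q, X q) A i) q :=
        ((Lv_smooth hL A i).comp (Xt_smooth hX)).differentiable (by simp) q
      rw [fderiv_fun_mul hc hd]
      simp only [ContinuousLinearMap.add_apply, ContinuousLinearMap.smul_apply,
        smul_eq_mul, fderiv_X_comp hX A i q]
    · rw [chain_apply hX hL, clm_expand]
      congr 1
      simp [Lq, Pi.single_apply, ite_mul]
  rw [step1]
  have hb : ∑ i, ∑ A, Lv L (q, X q) A i * fderiv ℝ X q (Pi.single j 1) A i
      = ∑ B, ∑ m, fderiv ℝ X q (Pi.single j 1) B m * Lv L (q, X q) B m := by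
    rw [Finset.sum_comm]
    exact Finset.sum_congr rfl fun B _ => Finset.sum_congr rfl fun m _ => mul_comm _ _
  simp only [Finset.sum_add_distrib]
  rw [hb]
  ring


/-- The energy derivative equals minus the defect sum. -/
lemma KE {L : Vel n k → ℝ} (hL : ContDiff ℝ (⊤ : ℕ∞) L)
    {X : (Fin n → ℝ) → (Fin k → Fin n → ℝ)} (hX : ContDiff ℝ (⊤ : ℕ∞) X)
    (hclosed : ∀ (q : Fin n → ℝ) (A : Fin k) (i j : Fin n),
      fderiv ℝ (fun q => Lv L (q, X q) A i) q (Pi.single j 1) =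
        fderiv ℝ (fun q => Lv L (q, X q) A j) q (Pi.single i 1))
    {Z : Fin k → Vel n k → Vel n k} (hZ : LagEqs L Z)
    (q : Fin n → ℝ) (j : Fin n) :
    fderiv ℝ (fun q => EL L (q, X q)) q (Pi.single j 1)
      = -∑ A, ∑ B, ∑ m, Lvv L (q, X q) B m A j
          * ((Z A (q, X q)).2 B m - fderiv ℝ X q (X q A) B m) := by
  have h1 : ∑ i, ∑ A, X q A i * fderiv ℝ (fun q => Lv L (q, X q) A i) q (Pi.single j 1)
      = (∑ A, ∑ i, X q A i * Lqv L (q, X q) i A j)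
        + ∑ A, ∑ B, ∑ m, Lvv L (q, X q) B m A j * fderiv ℝ X q (X q A) B m := by
    have hct : ∀ i A, X q A i * fderiv ℝ (fun q => Lv L (q, X q) A i) q (Pi.single j 1)
        = X q A i * Lqv L (q, X q) i A j
          + ∑ B, ∑ m, X q A i * (fderiv ℝ X q (Pi.single i 1) B m * Lvv L (q, X q) B m A j) := by
      intro i A
      rw [hclosed q A i j, Ctheta hL hX A j q i, mul_add, Finset.mul_sum]
      congr 1
      exact Finset.sum_congr rfl fun B _ => (Finset.mul_sum _ _ _)
    calc ∑ i, ∑ A, X q A i * fderiv ℝ (fun q => Lv L (q, X q) A i) q (Pi.single j 1)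
        = ∑ i, ∑ A, (X q A i * Lqv L (q, X q) i A j
            + ∑ B, ∑ m, X q A i * (fderiv ℝ X q (Pi.single i 1) B m * Lvv L (q, X q) B m A j)) :=
          Finset.sum_congr rfl fun i _ => Finset.sum_congr rfl fun A _ => hct i A
      _ = (∑ i, ∑ A, X q A i * Lqv L (q, X q) i A j)
          + ∑ i, ∑ A, ∑ B, ∑ m, X q A i
              * (fderiv ℝ X q (Pi.single i 1) B m * Lvv L (q, X q) B m A j) := by
          simp [Finset.sum_add_distrib]
      _ = (∑ A, ∑ i, X q A i * Lqv L (q, X q) i A j)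
          + ∑ A, ∑ B, ∑ m, ∑ i, X q A i
              * (fderiv ℝ X q (Pi.single i 1) B m * Lvv L (q, X q) B m A j) := by
          congr 1
          · exact Finset.sum_comm
          · rw [Finset.sum_comm]
            refine Finset.sum_congr rfl fun A _ => ?_
            rw [Finset.sum_comm]
            exact Finset.sum_congr rfl fun B _ => Finset.sum_comm
      _ = (∑ A, ∑ i, X q A i * Lqv L (q, X q) i A j)
          + ∑ A, ∑ B, ∑ m, Lvv L (q, X q) B m A j * fderiv ℝ X q (X q A) B m := by
          congr 1
          refine Finset.sum_congr rfl fun A _ => Finset.sum_congr rfl fun B _ =>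
            Finset.sum_congr rfl fun m _ => ?_
          rw [clm_expand1' (fderiv ℝ X q) (X q A) B m, Finset.mul_sum]
          exact Finset.sum_congr rfl fun i _ => by ring
  have hz := (hZ (q, X q)).2 j
  dsimp only at hz
  rw [EL_deriv hL hX q j, h1, ← hz]
  have ha : ∑ A, (∑ i, Lqv L (q, X q) i A j * X q A i
        + ∑ B, ∑ m, Lvv L (q, X q) B m A j * (Z A (q, X q)).2 B m)
      = (∑ A, ∑ i, X q A i * Lqv L (q, X q) i A j)
        + ∑ A, ∑ B, ∑ m, Lvv L (q, X q) B m A j * (Z A (q, X q)).2 B m := by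
    rw [Finset.sum_add_distrib]
    congr 1
    exact Finset.sum_congr rfl fun A _ => Finset.sum_congr rfl fun i _ => mul_comm _ _
  rw [ha]
  simp only [mul_sub, Finset.sum_sub_distrib]
  ring


lemma omega_eval {L : Vel n k → ℝ}
    {X : (Fin n → ℝ) → (Fin k → Fin n → ℝ)} (hX : ContDiff ℝ (⊤ : ℕ∞) X)
    {Z : Fin k → Vel n k → Vel n k} (hZ : LagEqs L Z)
    (q : Fin n → ℝ) (ζ : Vel n k) :
    ∑ A, omegaL L A (q, X q)
        (Z A (q, X q) - fderiv ℝ (fun q => ((q, X q) : Vel n k)) q (X q A)) ζ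
    = -∑ i, ζ.1 i * ∑ A, ∑ B, ∑ m, Lvv L (q, X q) B m A i
        * ((Z A (q, X q)).2 B m - fderiv ℝ X q (X q A) B m) := by
  have hz1 : ∀ A, (Z A (q, X q) - fderiv ℝ (fun q => ((q, X q) : Vel n k)) q (X q A)).1
      = (0 : Fin n → ℝ) := by
    intro A
    funext i
    have h1 := (hZ (q, X q)).1 A i
    have h2 := fderiv_Xt hX q (X q A)
    simp only [Prod.fst_sub, Pi.sub_apply, h1, h2]
    simp
  have hz2 : ∀ A, (Z A (q, X q) - fderiv ℝ (fun q => ((q, X q) : Vel n k)) q (X q A)).2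
      = (Z A (q, X q)).2 - fderiv ℝ X q (X q A) := by
    intro A
    have h2 := fderiv_Xt hX q (X q A)
    simp only [Prod.snd_sub, h2]
  have hsplit : ∀ A, (Z A (q, X q) - fderiv ℝ (fun q => ((q, X q) : Vel n k)) q (X q A))
      = (((0 : Fin n → ℝ), (Z A (q, X q)).2 - fderiv ℝ X q (X q A)) : Vel n k) := fun A =>
    Prod.ext (hz1 A) (hz2 A)
  calc ∑ A, omegaL L A (q, X q)
        (Z A (q, X q) - fderiv ℝ (fun q => ((q, X q) : Vel n k)) q (X q A)) ζ
      = ∑ A, ∑ i, -(ζ.1 i * (∑ B, ∑ m,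
          ((Z A (q, X q)).2 B m - fderiv ℝ X q (X q A) B m) * Lvv L (q, X q) B m A i)) := by
        refine Finset.sum_congr rfl fun A _ => ?_
        unfold omegaL
        rw [hsplit A]
        refine Finset.sum_congr rfl fun i _ => ?_
        rw [clm_expand (fderiv ℝ (fun w => Lv L w A i) (q, X q)) 0
          ((Z A (q, X q)).2 - fderiv ℝ X q (X q A))]
        simp only [Lvv, Pi.zero_apply, zero_mul, Finset.sum_const_zero, zero_add,
          Pi.sub_apply, zero_sub]
    _ = -∑ i, ζ.1 i * ∑ A, ∑ B, ∑ m, Lvv L (q, X q) B m A i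
        * ((Z A (q, X q)).2 B m - fderiv ℝ X q (X q A) B m) := by
        rw [Finset.sum_comm, ← Finset.sum_neg_distrib]
        refine Finset.sum_congr rfl fun i _ => ?_
        rw [Finset.mul_sum, ← Finset.sum_neg_distrib]
        refine Finset.sum_congr rfl fun A _ => ?_
        have hcomm : (∑ B, ∑ m, ((Z A (q, X q)).2 B m - fderiv ℝ X q (X q A) B m)
              * Lvv L (q, X q) B m A i)
            = ∑ B, ∑ m, Lvv L (q, X q) B m A i
              * ((Z A (q, X q)).2 B m - fderiv ℝ X q (X q A) B m) :=
          Finset.sum_congr rfl fun B _ => Finset.sum_congr rfl fun m _ => mul_comm _ _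
        rw [← hcomm]


lemma key3 {L : Vel n k → ℝ} (hL : ContDiff ℝ (⊤ : ℕ∞) L)
    {X : (Fin n → ℝ) → (Fin k → Fin n → ℝ)} (hX : ContDiff ℝ (⊤ : ℕ∞) X)
    (hclosed : ∀ (q : Fin n → ℝ) (A : Fin k) (i j : Fin n),
      fderiv ℝ (fun q => Lv L (q, X q) A i) q (Pi.single j 1) =
        fderiv ℝ (fun q => Lv L (q, X q) A j) q (Pi.single i 1))
    {U : Set (Fin k → ℝ)} {σ : (Fin k → ℝ) → (Fin n → ℝ)}
    (hU : IsOpen U) (hσ2 : ContDiffOn ℝ 2 σ U)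
    (heq : ∀ t ∈ U, ∀ A, fderiv ℝ σ t (Pi.single A 1) = X (σ t) A)
    (t : Fin k → ℝ) (ht : t ∈ U) (i : Fin n) :
    ∑ A, fderiv ℝ (fun s => Lv L (prolong σ s) A i) t (Pi.single A 1)
      = fderiv ℝ (fun q => EL L (q, X q)) (σ t) (Pi.single i 1)
        + Lq L (prolong σ t) i := by
  have hprol : ∀ s ∈ U, prolong σ s = ((σ s, X (σ s)) : Vel n k) := by
    intro s hs
    refine Prod.ext rfl ?_
    funext A
    exact heq s hs A
  have hσd : DifferentiableAt ℝ σ t :=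
    ((hσ2.contDiffAt (hU.mem_nhds ht)).differentiableAt (by norm_num))
  have hstep : ∀ A, fderiv ℝ (fun s => Lv L (prolong σ s) A i) t (Pi.single A 1)
      = fderiv ℝ (fun q => Lv L (q, X q) A i) (σ t) (X (σ t) A) := by
    intro A
    have hev : fderiv ℝ (fun s => Lv L (prolong σ s) A i) t
        = fderiv ℝ (fun s => Lv L (σ s, X (σ s)) A i) t := by
      apply Filter.EventuallyEq.fderiv_eq
      filter_upwards [hU.mem_nhds ht] with s hs
      rw [hprol s hs]
    have hc : (fun s => Lv L (σ s, X (σ s)) A i)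
        = (fun q => Lv L (q, X q) A i) ∘ σ := rfl
    have hg : DifferentiableAt ℝ (fun q => Lv L (q, X q) A i) (σ t) :=
      ((Lv_smooth hL A i).comp (Xt_smooth hX)).differentiable (by simp) (σ t)
    rw [hev, hc, fderiv_comp t hg hσd]
    simp [heq t ht A]
  calc ∑ A, fderiv ℝ (fun s => Lv L (prolong σ s) A i) t (Pi.single A 1)
      = ∑ A, ∑ j, X (σ t) A j
          * fderiv ℝ (fun q => Lv L (q, X q) A j) (σ t) (Pi.single i 1) := by
        refine Finset.sum_congr rfl fun A _ => ?_
        rw [hstep A, clm_expand1]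
        exact Finset.sum_congr rfl fun j _ => by rw [hclosed (σ t) A i j]
    _ = fderiv ℝ (fun q => EL L (q, X q)) (σ t) (Pi.single i 1)
        + Lq L (σ t, X (σ t)) i := by
        rw [EL_deriv hL hX (σ t) i, Finset.sum_comm]
        ring
    _ = fderiv ℝ (fun q => EL L (q, X q)) (σ t) (Pi.single i 1)
        + Lq L (prolong σ t) i := by rw [hprol t ht]

end HJ

/-- For an integrable `X`, the three conditions of the
Lagrangian Hamilton–Jacobi theorem are equivalent. -/
theorem lagrangian_hamilton_jacobi_three_equivalences {n k : ℕ} (L : Vel n k → ℝ)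
    (hL : ContDiff ℝ (⊤ : ℕ∞) L) (hreg : Regular L)
    (Z : Fin k → Vel n k → Vel n k) (hZsm : ∀ A, ContDiff ℝ (⊤ : ℕ∞) (Z A))
    (hZ : LagEqs L Z)
    (X : (Fin n → ℝ) → (Fin k → Fin n → ℝ)) (hXsm : ContDiff ℝ (⊤ : ℕ∞) X)
    (hclosed : PullbackClosed L X)
    (hInt : IntegrableX X) :
    ((∀ (q : Fin n → ℝ) (ζ : Vel n k),
        ∑ A, omegaL L A (q, X q)
          (Z A (q, X q) - fderiv ℝ (fun q => ((q, X q) : Vel n k)) q (X q A)) ζ = 0) ↔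
      (∀ q : Fin n → ℝ, fderiv ℝ (fun q => EL L (q, X q)) q = 0)) ∧
    ((∀ q : Fin n → ℝ, fderiv ℝ (fun q => EL L (q, X q)) q = 0) ↔
      (∀ U σ, IsIntegralSectionX X U σ → ELsol L U σ)) := by
  constructor
  · constructor
    · intro h q
      apply HJ.clm_eq_zero
      intro j
      rw [HJ.KE hL hXsm hclosed hZ q j, neg_eq_zero]
      have h2 := h q ((Pi.single j 1, 0) : Vel n k)
      rw [HJ.omega_eval hXsm hZ q _] at h2
      simpa [neg_eq_zero, Pi.single_apply, ite_mul, Finset.sum_ite_eq'] using h2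
    · intro h q ζ
      rw [HJ.omega_eval hXsm hZ q ζ]
      have hS : ∀ i, (∑ A, ∑ B, ∑ m, Lvv L (q, X q) B m A i
          * ((Z A (q, X q)).2 B m - fderiv ℝ X q (X q A) B m)) = 0 := by
        intro i
        have h0 : fderiv ℝ (fun q => EL L (q, X q)) q (Pi.single i 1) = 0 := by
          rw [h q]; rfl
        rw [HJ.KE hL hXsm hclosed hZ q i, neg_eq_zero] at h0
        exact h0
      simp [hS]
  · constructor
    · intro h U σ hsec t ht i
      obtain ⟨hU, hσ2, heq⟩ := hsec
      rw [HJ.key3 hL hXsm hclosed hU hσ2 heq t ht i, h (σ t)]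
      simp
    · intro h q
      obtain ⟨U, σ, hsec, h0U, hσ0⟩ := hInt q
      have hE := h U σ hsec 0 h0U
      obtain ⟨hU, hσ2, heq⟩ := hsec
      apply HJ.clm_eq_zero
      intro i
      have h1 := hE i
      rw [HJ.key3 hL hXsm hclosed hU hσ2 heq 0 h0U i, hσ0] at h1
      linarith
end
end
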